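/- arXiv:2410.23491 — 11 statements merged into one kernel-verified Lean document; each statement's English description precedes it below -/
import Mathlib

section
/- Let a : [-M,M] → ℝ be Lipschitz continuous with Lipschitz constant Lip(a) and satisfy a(ξ) ≥ 1/K for all ξ ∈ [-M,M]. Then: (1) for every φ ∈ X there exists exactly one number r(φ) ∈ (0,K] with ∫_{-r(φ)}^{0} a(φ(s)) ds = 1; and (2) the resulting map r : X → (0,K] is Lipschitz continuous with respect to the sup norm, with Lipschitz constant at most K²·Lip(a), i.e. |r(φ) − r(ψ)| ≤ K²·Lip(a)·‖φ − ψ‖ for all φ, ψ ∈ X. -/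
open Set

/-- Membership in the phase space `X`: continuous functions on `[-K,0]` with sup norm
less than `M` and Lipschitz constant at most `L₀`. -/
def memX (K M L₀ : ℝ) (φ : ℝ → ℝ) : Prop :=
  ContinuousOn φ (Set.Icc (-K) 0) ∧ (∀ s ∈ Set.Icc (-K) 0, |φ s| < M) ∧
    ∀ s ∈ Set.Icc (-K) 0, ∀ t ∈ Set.Icc (-K) 0, |φ s - φ t| ≤ L₀ * |s - t|

/-!
Write `F_f(r) = ∫_{-r}^0 f`. If `f ≥ 1/K` on `[-K,0]`, then `F_f` grows with slope at least
`1/K` on `[0,K]`, so it is strictly increasing and continuous with `F_f(0) = 0`, `F_f(K) ≥ 1`: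
the equation `F_f(r) = 1` has exactly one root. For two such roots `r₂ ≤ r₁` of `F_f` and `F_g`,
`(r₁ - r₂)/K ≤ F_f(r₁) - F_f(r₂) = F_g(r₂) - F_f(r₂) = ∫_{-r₂}^0 (g - f) ≤ K · sup |f - g|`.
Applied to `f = a ∘ φ`, `g = a ∘ ψ` this gives the Lipschitz bound `K² · Lip(a) · ‖φ - ψ‖`.
-/

open MeasureTheory intervalIntegral

lemma IntervalIntegrable.mono_of_mem_Icc {f : ℝ → ℝ} {μ : Measure ℝ} {a b c d : ℝ}
    (hf : IntervalIntegrable f μ a b) (hc : c ∈ Icc a b) (hd : d ∈ Icc a b) :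
    IntervalIntegrable f μ c d :=
  hf.mono_set (uIcc_subset_uIcc (Icc_subset_uIcc hc) (Icc_subset_uIcc hd))

section IntegralBounds

variable {f : ℝ → ℝ} {x y c : ℝ}

lemma mul_le_integral_of_le_on (hxy : x ≤ y) (hf : IntervalIntegrable f volume x y)
    (h : ∀ s ∈ Icc x y, c ≤ f s) : (y - x) * c ≤ ∫ s in x..y, f s := by
  simpa using integral_mono_on hxy intervalIntegrable_const hf h

lemma integral_le_mul_of_le_on (hxy : x ≤ y) (hf : IntervalIntegrable f volume x y)
    (h : ∀ s ∈ Icc x y, f s ≤ c) : ∫ s in x..y, f s ≤ (y - x) * c := by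
  simpa using integral_mono_on hxy hf intervalIntegrable_const h

end IntegralBounds

section ThresholdDelay

variable {f g : ℝ → ℝ} {K r₁ r₂ δ : ℝ}

lemma sub_div_le_integral_sub_integral (hf : IntervalIntegrable f volume (-K) 0)
    (hlb : ∀ s ∈ Icc (-K) 0, 1 / K ≤ f s) (h₁ : 0 ≤ r₁) (h₁₂ : r₁ ≤ r₂) (h₂ : r₂ ≤ K) :
    (r₂ - r₁) / K ≤ (∫ s in (-r₂)..0, f s) - ∫ s in (-r₁)..0, f s := by
  have hf₂₁ := hf.mono_of_mem_Icc (c := -r₂) (d := -r₁) ⟨by linarith, by linarith⟩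
    ⟨by linarith, by linarith⟩
  have hf₁₀ := hf.mono_of_mem_Icc (c := -r₁) (d := 0) ⟨by linarith, by linarith⟩
    ⟨by linarith, le_rfl⟩
  rw [← integral_add_adjacent_intervals hf₂₁ hf₁₀, add_sub_cancel_right]
  calc (r₂ - r₁) / K = (-r₁ - -r₂) * (1 / K) := by ring
    _ ≤ ∫ s in (-r₂)..(-r₁), f s :=
      mul_le_integral_of_le_on (by linarith) hf₂₁ fun s hs =>
        hlb s ⟨by linarith [hs.1], by linarith [hs.2]⟩

lemma strictMonoOn_integral_neg (hK : 0 < K) (hf : IntervalIntegrable f volume (-K) 0)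
    (hlb : ∀ s ∈ Icc (-K) 0, 1 / K ≤ f s) :
    StrictMonoOn (fun r => ∫ s in (-r)..0, f s) (Icc 0 K) := fun r₁ h₁ r₂ h₂ h₁₂ => by
  have := sub_div_le_integral_sub_integral hf hlb h₁.1 h₁₂.le h₂.2
  have := div_pos (sub_pos.2 h₁₂) hK
  linarith

lemma continuousOn_integral_neg (hf : IntervalIntegrable f volume (-K) 0) :
    ContinuousOn (fun r => ∫ s in (-r)..0, f s) (Icc 0 K) := by
  refine ((continuousOn_primitive_interval' hf right_mem_uIcc).neg.comp continuousOn_neg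
    fun r hr => Icc_subset_uIcc ⟨neg_le_neg hr.2, neg_nonpos.2 hr.1⟩).congr fun r _ => ?_
  simp only [Function.comp_apply, Pi.neg_apply, integral_symm 0 (-r)]

lemma existsUnique_integral_eq_one (hK : 0 < K) (hf : IntervalIntegrable f volume (-K) 0)
    (hlb : ∀ s ∈ Icc (-K) 0, 1 / K ≤ f s) :
    ∃! r, r ∈ Ioc 0 K ∧ ∫ s in (-r)..0, f s = 1 := by
  set F := fun r => ∫ s in (-r)..0, f s
  have hF0 : F 0 = 0 := by simp [F]
  have hFK : 1 ≤ F K := by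
    simpa [hF0, hK.ne'] using sub_div_le_integral_sub_integral hf hlb le_rfl hK.le le_rfl
  obtain ⟨r, hr, hFr⟩ :=
    intermediate_value_Icc hK.le (continuousOn_integral_neg hf) ⟨hF0.trans_le zero_le_one, hFK⟩
  have hr0 : r ≠ 0 := by
    rintro rfl
    simp at hFr
  refine ⟨r, ⟨⟨hr.1.lt_of_ne' hr0, hr.2⟩, hFr⟩, fun r' ⟨hr', hFr'⟩ => ?_⟩
  exact (strictMonoOn_integral_neg hK hf hlb).injOn (Ioc_subset_Icc_self hr') hr
    (hFr'.trans hFr.symm)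

lemma sub_le_of_integral_eq_one (hf : IntervalIntegrable f volume (-K) 0)
    (hg : IntervalIntegrable g volume (-K) 0) (hlb : ∀ s ∈ Icc (-K) 0, 1 / K ≤ f s)
    (hgf : ∀ s ∈ Icc (-K) 0, g s - f s ≤ δ) (hδ : 0 ≤ δ)
    (h₁ : r₁ ∈ Ioc 0 K) (hf₁ : ∫ s in (-r₁)..0, f s = 1)
    (h₂ : r₂ ∈ Ioc 0 K) (hg₂ : ∫ s in (-r₂)..0, g s = 1) (h₂₁ : r₂ ≤ r₁) :
    r₁ - r₂ ≤ K ^ 2 * δ := by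
  have hK : 0 < K := h₂.1.trans_le h₂.2
  have hr₂ : -K ≤ -r₂ := neg_le_neg h₂.2
  have hr₂' : -r₂ ≤ 0 := neg_nonpos.2 h₂.1.le
  have hfI := hf.mono_of_mem_Icc ⟨hr₂, hr₂'⟩ ⟨hr₂.trans hr₂', le_rfl⟩
  have hgI := hg.mono_of_mem_Icc ⟨hr₂, hr₂'⟩ ⟨hr₂.trans hr₂', le_rfl⟩
  have hdiv : (r₁ - r₂) / K ≤ K * δ :=
    calc (r₁ - r₂) / K ≤ (∫ s in (-r₁)..0, f s) - ∫ s in (-r₂)..0, f s :=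
          sub_div_le_integral_sub_integral hf hlb h₂.1.le h₂₁ h₁.2
      _ = ∫ s in (-r₂)..0, (g s - f s) := by rw [integral_sub hgI hfI, hf₁, hg₂]
      _ ≤ (0 - -r₂) * δ :=
          integral_le_mul_of_le_on hr₂' (hgI.sub hfI) fun s hs => hgf s ⟨hr₂.trans hs.1, hs.2⟩
      _ ≤ K * δ := mul_le_mul_of_nonneg_right (by linarith [h₂.2]) hδ
  rw [div_le_iff₀ hK] at hdiv
  linarith

lemma abs_sub_le_of_integral_eq_one (hf : IntervalIntegrable f volume (-K) 0)
    (hg : IntervalIntegrable g volume (-K) 0) (hflb : ∀ s ∈ Icc (-K) 0, 1 / K ≤ f s)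
    (hglb : ∀ s ∈ Icc (-K) 0, 1 / K ≤ g s) (hfg : ∀ s ∈ Icc (-K) 0, |f s - g s| ≤ δ)
    (h₁ : r₁ ∈ Ioc 0 K) (hf₁ : ∫ s in (-r₁)..0, f s = 1)
    (h₂ : r₂ ∈ Ioc 0 K) (hg₂ : ∫ s in (-r₂)..0, g s = 1) :
    |r₁ - r₂| ≤ K ^ 2 * δ := by
  have hδ : 0 ≤ δ := (abs_nonneg _).trans (hfg 0 ⟨by linarith [h₁.1, h₁.2], le_rfl⟩)
  rcases le_total r₂ r₁ with h | h
  · rw [abs_of_nonneg (sub_nonneg.2 h)]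
    refine sub_le_of_integral_eq_one hf hg hflb (fun s hs => ?_) hδ h₁ hf₁ h₂ hg₂ h
    exact (le_abs_self _).trans (abs_sub_comm (f s) (g s) ▸ hfg s hs)
  · rw [abs_sub_comm, abs_of_nonneg (sub_nonneg.2 h)]
    exact sub_le_of_integral_eq_one hg hf hglb (fun s hs => (le_abs_self _).trans (hfg s hs))
      hδ h₂ hg₂ h₁ hf₁ h

end ThresholdDelay

section PhaseSpace

variable {K M L₀ : ℝ} {φ ψ : ℝ → ℝ}

lemma memX.mapsTo (hφ : memX K M L₀ φ) : MapsTo φ (Icc (-K) 0) (Icc (-M) M) :=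
  fun s hs => abs_le.1 (hφ.2.1 s hs).le

lemma memX.abs_sub_le_iSup (hφ : memX K M L₀ φ) (hψ : memX K M L₀ ψ) {s : ℝ}
    (hs : s ∈ Icc (-K) 0) : |φ s - ψ s| ≤ ⨆ t : Icc (-K) (0 : ℝ), |φ t - ψ t| := by
  refine le_ciSup (f := fun t : Icc (-K) (0 : ℝ) => |φ t - ψ t|) ⟨M + M, ?_⟩ ⟨s, hs⟩
  rintro _ ⟨t, rfl⟩
  exact (abs_sub _ _).trans (add_le_add (hφ.2.1 t t.2).le (hψ.2.1 t t.2).le)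

end PhaseSpace

theorem threshold_delay_well_defined_and_lipschitz_general
    (K M L₀ La : ℝ) (hK : 0 < K) (hM : 0 < M)
    (a : ℝ → ℝ)
    (ha_lip : ∀ x ∈ Icc (-M) M, ∀ y ∈ Icc (-M) M, |a x - a y| ≤ La * |x - y|)
    (ha_lb : ∀ ξ ∈ Icc (-M) M, 1 / K ≤ a ξ) :
    (∀ φ : ℝ → ℝ, memX K M L₀ φ →
      ∃! r : ℝ, r ∈ Ioc 0 K ∧ (∫ s in (-r)..0, a (φ s)) = 1) ∧
    (∀ φ ψ : ℝ → ℝ, memX K M L₀ φ → memX K M L₀ ψ →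
      ∀ rφ rψ : ℝ,
        rφ ∈ Ioc 0 K → (∫ s in (-rφ)..0, a (φ s)) = 1 →
        rψ ∈ Ioc 0 K → (∫ s in (-rψ)..0, a (ψ s)) = 1 →
        |rφ - rψ| ≤ K ^ 2 * La * ⨆ s : Icc (-K) (0 : ℝ), |φ (s : ℝ) - ψ (s : ℝ)|) := by
  have hLa : 0 ≤ La := by
    have := ha_lip M ⟨by linarith, le_rfl⟩ (-M) ⟨le_rfl, by linarith⟩
    rw [sub_neg_eq_add, abs_of_pos (by linarith : 0 < M + M)] at this
    exact nonneg_of_mul_nonneg_left ((abs_nonneg _).trans this) (by linarith)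
  have ha_cont : ContinuousOn a (Icc (-M) M) :=
    (LipschitzOnWith.of_dist_le_mul (K := La.toNNReal) fun x hx y hy => by
      simpa [Real.dist_eq, hLa] using ha_lip x hx y hy).continuousOn
  have hint (φ) (hφ : memX K M L₀ φ) : IntervalIntegrable (fun s => a (φ s)) volume (-K) 0 :=
    (ha_cont.comp hφ.1 hφ.mapsTo).intervalIntegrable_of_Icc (by linarith)
  have hlb (φ) (hφ : memX K M L₀ φ) : ∀ s ∈ Icc (-K) 0, 1 / K ≤ a (φ s) :=
    fun s hs => ha_lb _ (hφ.mapsTo hs)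
  refine ⟨fun φ hφ => existsUnique_integral_eq_one hK (hint φ hφ) (hlb φ hφ), ?_⟩
  intro φ ψ hφ hψ rφ rψ hrφ hφ₁ hrψ hψ₁
  rw [mul_assoc]
  refine abs_sub_le_of_integral_eq_one (hint φ hφ) (hint ψ hψ) (hlb φ hφ) (hlb ψ hψ)
    (fun s hs => ?_) hrφ hφ₁ hrψ hψ₁
  calc |a (φ s) - a (ψ s)| ≤ La * |φ s - ψ s| := ha_lip _ (hφ.mapsTo hs) _ (hψ.mapsTo hs)
    _ ≤ La * _ := mul_le_mul_of_nonneg_left (hφ.abs_sub_le_iSup hψ hs) hLa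

/-- The threshold delay `r(φ)`, defined by `∫_{-r(φ)}^0 a(φ(s)) ds = 1`, is well defined
on the phase space, takes values in `(0,K]`, and is Lipschitz continuous with constant
at most `K² · Lip(a)` with respect to the sup norm. -/
theorem threshold_delay_well_defined_and_lipschitz
    (K M L₀ La : ℝ) (hK : 0 < K) (hM : 0 < M) (hL₀ : 0 < L₀)
    (a : ℝ → ℝ)
    (ha_lip : ∀ x ∈ Icc (-M) M, ∀ y ∈ Icc (-M) M, |a x - a y| ≤ La * |x - y|)
    (ha_lb : ∀ ξ ∈ Icc (-M) M, 1 / K ≤ a ξ) :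
    (∀ φ : ℝ → ℝ, memX K M L₀ φ →
      ∃! r : ℝ, r ∈ Ioc 0 K ∧ (∫ s in (-r)..0, a (φ s)) = 1) ∧
    (∀ φ ψ : ℝ → ℝ, memX K M L₀ φ → memX K M L₀ ψ →
      ∀ rφ rψ : ℝ,
        rφ ∈ Ioc 0 K → (∫ s in (-rφ)..0, a (φ s)) = 1 →
        rψ ∈ Ioc 0 K → (∫ s in (-rψ)..0, a (ψ s)) = 1 →
        |rφ - rψ| ≤ K ^ 2 * La * ⨆ s : Icc (-K) (0 : ℝ), |φ (s : ℝ) - ψ (s : ℝ)|) :=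
  threshold_delay_well_defined_and_lipschitz_general K M L₀ La hK hM a ha_lip ha_lb
end

section
/- Let a : [-M,M] → (0,∞) be continuous, let I ⊆ ℝ be an interval, and let x be a continuous function with values in (-M,M) defined on an interval containing [t − K, t] for every t ∈ I. Suppose η : I → ℝ satisfies t − K ≤ η(t) < t and ∫_{η(t)}^{t} a(x(s)) ds = 1 for every t ∈ I. Then η is strictly increasing on I. -/
open Set

/-- For a threshold-type state-dependent delay, the delayed argument
`η(t)`, determined by `∫_{η(t)}^t a(x(s)) ds = 1` with `t - K ≤ η(t) < t`,
is strictly increasing on the interval `I`. -/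
theorem threshold_delay_eta_strictMono
    (K M : ℝ) (hK : 0 < K) (hM : 0 < M)
    (a : ℝ → ℝ) (ha_cont : ContinuousOn a (Icc (-M) M))
    (ha_pos : ∀ ξ ∈ Icc (-M) M, 0 < a ξ)
    (I : Set ℝ) (hI : I.OrdConnected)
    (x : ℝ → ℝ)
    (hx_cont : ∀ t ∈ I, ContinuousOn x (Icc (t - K) t))
    (hx_range : ∀ t ∈ I, ∀ s ∈ Icc (t - K) t, x s ∈ Ioo (-M) M)
    (η : ℝ → ℝ)
    (hη_lb : ∀ t ∈ I, t - K ≤ η t)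
    (hη_lt : ∀ t ∈ I, η t < t)
    (hη_int : ∀ t ∈ I, (∫ s in (η t)..t, a (x s)) = 1) :
    StrictMonoOn η I := by
  intro t1 ht1 t2 ht2 hlt
  by_contra hge
  push_neg at hge
  -- all relevant points lie in [t2 - K, t2]
  set f : ℝ → ℝ := fun s => a (x s) with hf
  have hcont : ContinuousOn f (Icc (t2 - K) t2) := by
    apply ha_cont.comp (hx_cont t2 ht2)
    intro s hs
    exact Ioo_subset_Icc_self (hx_range t2 ht2 s hs)
  have hη2lb : t2 - K ≤ η t2 := hη_lb t2 ht2
  have hη1lb : t2 - K ≤ η t1 := le_trans hη2lb hge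
  have hη1ub : η t1 ≤ t2 := le_of_lt (lt_trans (hη_lt t1 ht1) hlt)
  have ht1mem : t1 ∈ Icc (t2 - K) t2 :=
    ⟨le_trans hη1lb (le_of_lt (hη_lt t1 ht1)), le_of_lt hlt⟩
  have hint : ∀ c d, c ∈ Icc (t2 - K) t2 → d ∈ Icc (t2 - K) t2 →
      IntervalIntegrable f MeasureTheory.volume c d := by
    intro c d hc hd
    exact (hcont.mono (uIcc_subset_Icc hc hd)).intervalIntegrable
  have hpos : ∀ s ∈ Icc (t2 - K) t2, 0 < f s := fun s hs =>
    ha_pos _ (Ioo_subset_Icc_self (hx_range t2 ht2 s hs))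
  have hmemη2 : η t2 ∈ Icc (t2 - K) t2 := ⟨hη2lb, le_of_lt (hη_lt t2 ht2)⟩
  have hmemη1 : η t1 ∈ Icc (t2 - K) t2 := ⟨hη1lb, hη1ub⟩
  have hmemt2 : t2 ∈ Icc (t2 - K) t2 := ⟨by linarith, le_refl _⟩
  have hsplit1 : (∫ s in (η t2)..(η t1), f s) + (∫ s in (η t1)..t2, f s)
      = ∫ s in (η t2)..t2, f s :=
    intervalIntegral.integral_add_adjacent_intervals
      (hint _ _ hmemη2 hmemη1) (hint _ _ hmemη1 hmemt2)
  have hsplit2 : (∫ s in (η t1)..t1, f s) + (∫ s in t1..t2, f s)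
      = ∫ s in (η t1)..t2, f s :=
    intervalIntegral.integral_add_adjacent_intervals
      (hint _ _ hmemη1 ht1mem) (hint _ _ ht1mem hmemt2)
  have h1 : (0:ℝ) ≤ ∫ s in (η t2)..(η t1), f s := by
    apply intervalIntegral.integral_nonneg hge
    intro u hu
    exact le_of_lt (hpos u ⟨le_trans hη2lb hu.1, le_trans hu.2 hη1ub⟩)
  have h2 : (0:ℝ) < ∫ s in t1..t2, f s := by
    apply intervalIntegral.intervalIntegral_pos_of_pos_on
      (hint _ _ ht1mem hmemt2) _ hlt
    intro u hu
    exact hpos u ⟨le_trans ht1mem.1 (le_of_lt hu.1), le_of_lt hu.2⟩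
  have e1 : (∫ s in (η t2)..t2, f s) = 1 := hη_int t2 ht2
  have e2 : (∫ s in (η t1)..t1, f s) = 1 := hη_int t1 ht1
  rw [e1] at hsplit1
  rw [e2] at hsplit2
  linarith
end

section
/- Let R : [-M,M]² → (0,K] be Lipschitz continuous in each variable with constants L₁ (first variable) and L₂ (second variable), and assume L₁ + 2L₂ < 1/L₀. Then: (1) for every φ ∈ X, the map σ(φ) : [0,K] → (0,K], σ(φ)(s) = R(φ(0), φ(−s)), is a contraction with contraction constant L₂·L₀ < 1, and hence there is exactly one r(φ) ∈ (0,K] with r(φ) = R(φ(0), φ(−r(φ))); and (2) the map r : X → (0,K] is Lipschitz continuous with respect to the sup norm with Lipschitz constant at most (L₁ + L₂)/(1 − L₂·L₀). -/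
open Set

/-- The delay implicitly given by two values, `r(φ) = R(φ(0), φ(-r(φ)))`, is well
defined on the phase space: the map `σ(φ)(s) = R(φ(0), φ(-s))` is a contraction of
`[0,K]` into `(0,K]` with contraction constant `L₂·L₀ < 1`, it admits a unique fixed
point `r(φ) ∈ (0,K]`, and the resulting delay map is Lipschitz continuous with
constant at most `(L₁ + L₂)/(1 - L₂·L₀)` with respect to the sup norm. -/
theorem implicit_two_value_delay_well_defined_and_lipschitz
    (K M L₀ L₁ L₂ : ℝ) (hK : 0 < K) (hM : 0 < M) (hL₀ : 0 < L₀)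
    (hL₁ : 0 ≤ L₁) (hL₂ : 0 ≤ L₂) (hLip : L₁ + 2 * L₂ < 1 / L₀)
    (R : ℝ → ℝ → ℝ)
    (hR_range : ∀ u ∈ Icc (-M) M, ∀ v ∈ Icc (-M) M, R u v ∈ Ioc 0 K)
    (hR_lip1 : ∀ u ∈ Icc (-M) M, ∀ u' ∈ Icc (-M) M, ∀ v ∈ Icc (-M) M,
      |R u v - R u' v| ≤ L₁ * |u - u'|)
    (hR_lip2 : ∀ u ∈ Icc (-M) M, ∀ v ∈ Icc (-M) M, ∀ v' ∈ Icc (-M) M,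
      |R u v - R u v'| ≤ L₂ * |v - v'|) :
    (∀ φ : ℝ → ℝ, memX K M L₀ φ →
      L₂ * L₀ < 1 ∧
      (∀ s ∈ Icc (0 : ℝ) K, R (φ 0) (φ (-s)) ∈ Ioc 0 K) ∧
      (∀ s ∈ Icc (0 : ℝ) K, ∀ s' ∈ Icc (0 : ℝ) K,
        |R (φ 0) (φ (-s)) - R (φ 0) (φ (-s'))| ≤ L₂ * L₀ * |s - s'|) ∧
      (∃! r : ℝ, r ∈ Ioc 0 K ∧ R (φ 0) (φ (-r)) = r)) ∧
    (∀ φ ψ : ℝ → ℝ, memX K M L₀ φ → memX K M L₀ ψ →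
      ∀ rφ rψ : ℝ,
        rφ ∈ Ioc 0 K → R (φ 0) (φ (-rφ)) = rφ →
        rψ ∈ Ioc 0 K → R (ψ 0) (ψ (-rψ)) = rψ →
        |rφ - rψ| ≤ (L₁ + L₂) / (1 - L₂ * L₀) *
          ⨆ s : Icc (-K) (0 : ℝ), |φ (s : ℝ) - ψ (s : ℝ)|) := by
  have hc : L₂ * L₀ < 1 := by
    have h1 : 1 / L₀ * L₀ = 1 := one_div_mul_cancel hL₀.ne'
    nlinarith [mul_lt_mul_of_pos_right hLip hL₀, mul_nonneg hL₁ hL₀.le, mul_nonneg hL₂ hL₀.le]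
  have h0mem : (0:ℝ) ∈ Icc (-K) (0:ℝ) := ⟨by linarith, le_refl 0⟩
  have hneg : ∀ s ∈ Icc (0:ℝ) K, -s ∈ Icc (-K) (0:ℝ) := by
    intro s hs; exact ⟨by linarith [hs.2], by linarith [hs.1]⟩
  -- pointwise value memberships
  have hval : ∀ φ : ℝ → ℝ, memX K M L₀ φ → ∀ s ∈ Icc (-K) (0:ℝ), φ s ∈ Icc (-M) M := by
    intro φ hφ s hs
    have := hφ.2.1 s hs
    rw [abs_lt] at this
    exact ⟨this.1.le, this.2.le⟩
  -- the contraction estimate for a single φ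
  have hcontr : ∀ φ : ℝ → ℝ, memX K M L₀ φ → ∀ s ∈ Icc (0:ℝ) K, ∀ s' ∈ Icc (0:ℝ) K,
      |R (φ 0) (φ (-s)) - R (φ 0) (φ (-s'))| ≤ L₂ * L₀ * |s - s'| := by
    intro φ hφ s hs s' hs'
    have h1 : |R (φ 0) (φ (-s)) - R (φ 0) (φ (-s'))| ≤ L₂ * |φ (-s) - φ (-s')| :=
      hR_lip2 _ (hval φ hφ 0 h0mem) _ (hval φ hφ _ (hneg s hs)) _ (hval φ hφ _ (hneg s' hs'))
    have h2 : |φ (-s) - φ (-s')| ≤ L₀ * |(-s) - (-s')| :=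
      hφ.2.2 _ (hneg s hs) _ (hneg s' hs')
    have h3 : |(-s) - (-s')| = |s - s'| := by rw [← abs_neg]; ring_nf
    calc |R (φ 0) (φ (-s)) - R (φ 0) (φ (-s'))| ≤ L₂ * |φ (-s) - φ (-s')| := h1
      _ ≤ L₂ * (L₀ * |s - s'|) := by
          apply mul_le_mul_of_nonneg_left _ hL₂
          rw [← h3]; exact h2
      _ = L₂ * L₀ * |s - s'| := by ring
  constructor
  · intro φ hφ
    have hrange : ∀ s ∈ Icc (0:ℝ) K, R (φ 0) (φ (-s)) ∈ Ioc 0 K := by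
      intro s hs
      exact hR_range _ (hval φ hφ 0 h0mem) _ (hval φ hφ _ (hneg s hs))
    refine ⟨hc, hrange, hcontr φ hφ, ?_⟩
    -- existence via IVT
    set σ : ℝ → ℝ := fun s => R (φ 0) (φ (-s)) with hσ
    have hσcont : ContinuousOn σ (Icc 0 K) := by
      have : LipschitzOnWith (Real.toNNReal (L₂ * L₀)) σ (Icc 0 K) := by
        apply LipschitzOnWith.of_dist_le_mul
        intro x hx y hy
        simp only [Real.dist_eq]
        calc |σ x - σ y| ≤ L₂ * L₀ * |x - y| := hcontr φ hφ x hx y hy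
          _ ≤ (Real.toNNReal (L₂ * L₀) : ℝ) * |x - y| := by
              apply mul_le_mul_of_nonneg_right (Real.le_coe_toNNReal _) (abs_nonneg _)
      exact this.continuousOn
    have hgcont : ContinuousOn (fun s => σ s - s) (Icc 0 K) :=
      hσcont.sub continuousOn_id
    have hg0 : 0 < σ 0 - 0 := by
      have := (hrange 0 ⟨le_refl 0, hK.le⟩).1; rw [hσ]; simpa using this
    have hgK : σ K - K ≤ 0 := by
      have := (hrange K ⟨hK.le, le_refl K⟩).2; linarith
    have hivt := intermediate_value_Icc' hK.le hgcont
    have h0img : (0:ℝ) ∈ (fun s => σ s - s) '' Icc 0 K := hivt ⟨hgK, hg0.le⟩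
    obtain ⟨r, hrmem, hr⟩ := h0img
    have hrfix : σ r = r := by simpa [sub_eq_zero] using hr
    have hrpos : 0 < r := by
      rcases eq_or_lt_of_le hrmem.1 with h | h
      · exfalso; rw [← h] at hrfix; linarith [hg0]
      · exact h
    refine ⟨r, ⟨⟨hrpos, hrmem.2⟩, hrfix⟩, ?_⟩
    -- uniqueness
    intro r' ⟨hr'mem, hr'fix⟩
    have hest : |σ r' - σ r| ≤ L₂ * L₀ * |r' - r| :=
      hcontr φ hφ r' ⟨hr'mem.1.le, hr'mem.2⟩ r ⟨hrpos.le, hrmem.2⟩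
    have hfix' : σ r' = r' := hr'fix
    rw [hfix', hrfix] at hest
    by_contra hne
    have hd : 0 < |r' - r| := abs_pos.mpr (sub_ne_zero.mpr hne)
    nlinarith [mul_pos (sub_pos.mpr hc) hd]
  · intro φ ψ hφ hψ rφ rψ hrφmem hrφ hrψmem hrψ
    haveI : Nonempty (Icc (-K) (0:ℝ)) := (Set.nonempty_Icc.mpr (by linarith)).to_subtype
    set N := ⨆ s : Icc (-K) (0:ℝ), |φ (s : ℝ) - ψ (s : ℝ)| with hN
    have hbdd : BddAbove (Set.range fun s : Icc (-K) (0:ℝ) => |φ (s : ℝ) - ψ (s : ℝ)|) := by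
      refine ⟨2 * M, ?_⟩
      rintro x ⟨s, rfl⟩
      have h1 := hφ.2.1 s s.2
      have h2 := hψ.2.1 s s.2
      calc |φ (s:ℝ) - ψ (s:ℝ)| ≤ |φ (s:ℝ)| + |ψ (s:ℝ)| := abs_sub _ _
        _ ≤ 2 * M := by linarith
    have hle : ∀ s ∈ Icc (-K) (0:ℝ), |φ s - ψ s| ≤ N :=
      fun s hs => le_ciSup hbdd ⟨s, hs⟩
    have hrφIcc : -rφ ∈ Icc (-K) (0:ℝ) := ⟨by linarith [hrφmem.2], by linarith [hrφmem.1]⟩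
    have hrψIcc : -rψ ∈ Icc (-K) (0:ℝ) := ⟨by linarith [hrψmem.2], by linarith [hrψmem.1]⟩
    have key : |rφ - rψ| ≤ L₁ * N + L₂ * N + L₂ * L₀ * |rφ - rψ| := by
      have e1 : |R (φ 0) (φ (-rφ)) - R (ψ 0) (φ (-rφ))| ≤ L₁ * |φ 0 - ψ 0| :=
        hR_lip1 _ (hval φ hφ 0 h0mem) _ (hval ψ hψ 0 h0mem) _ (hval φ hφ _ hrφIcc)
      have e2 : |R (ψ 0) (φ (-rφ)) - R (ψ 0) (ψ (-rψ))| ≤ L₂ * |φ (-rφ) - ψ (-rψ)| :=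
        hR_lip2 _ (hval ψ hψ 0 h0mem) _ (hval φ hφ _ hrφIcc) _ (hval ψ hψ _ hrψIcc)
      have e3 : |φ (-rφ) - ψ (-rψ)| ≤ |φ (-rφ) - ψ (-rφ)| + |ψ (-rφ) - ψ (-rψ)| := by
        have := abs_sub_abs_le_abs_sub (φ (-rφ) - ψ (-rφ)) (ψ (-rψ) - ψ (-rφ))
        calc |φ (-rφ) - ψ (-rψ)| = |(φ (-rφ) - ψ (-rφ)) + (ψ (-rφ) - ψ (-rψ))| := by ring_nf
          _ ≤ _ := abs_add_le _ _
      have e4 : |ψ (-rφ) - ψ (-rψ)| ≤ L₀ * |(-rφ) - (-rψ)| := hψ.2.2 _ hrφIcc _ hrψIcc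
      have e5 : |(-rφ) - (-rψ)| = |rφ - rψ| := by rw [← abs_neg]; ring_nf
      have e6 : |φ 0 - ψ 0| ≤ N := hle 0 h0mem
      have e7 : |φ (-rφ) - ψ (-rφ)| ≤ N := hle _ hrφIcc
      calc |rφ - rψ| = |R (φ 0) (φ (-rφ)) - R (ψ 0) (ψ (-rψ))| := by rw [hrφ, hrψ]
        _ ≤ |R (φ 0) (φ (-rφ)) - R (ψ 0) (φ (-rφ))| +
            |R (ψ 0) (φ (-rφ)) - R (ψ 0) (ψ (-rψ))| := by
              have := abs_add_le (R (φ 0) (φ (-rφ)) - R (ψ 0) (φ (-rφ)))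
                (R (ψ 0) (φ (-rφ)) - R (ψ 0) (ψ (-rψ)))
              calc _ = |(R (φ 0) (φ (-rφ)) - R (ψ 0) (φ (-rφ))) +
                  (R (ψ 0) (φ (-rφ)) - R (ψ 0) (ψ (-rψ)))| := by ring_nf
                _ ≤ _ := this
        _ ≤ L₁ * |φ 0 - ψ 0| + L₂ * |φ (-rφ) - ψ (-rψ)| := add_le_add e1 e2
        _ ≤ L₁ * N + L₂ * (N + L₀ * |rφ - rψ|) := by
              have : |φ (-rφ) - ψ (-rψ)| ≤ N + L₀ * |rφ - rψ| := by
                rw [e5] at e4; linarith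
              exact add_le_add (mul_le_mul_of_nonneg_left e6 hL₁)
                (mul_le_mul_of_nonneg_left this hL₂)
        _ = L₁ * N + L₂ * N + L₂ * L₀ * |rφ - rψ| := by ring
    have hpos : 0 < 1 - L₂ * L₀ := by linarith
    rw [div_mul_eq_mul_div, le_div_iff₀ hpos]
    nlinarith [key]
end

section
/- Let R : [-M,M]² → (0,K] be Lipschitz continuous in each variable with constants L₁, L₂ satisfying L₁ + 2L₂ < 1/L₀, and let r(φ) denote the unique solution in (0,K] of r(φ) = R(φ(0), φ(−r(φ))) for φ a continuous function on [-K,0] with values in [-M,M] and Lipschitz constant at most L₀. Let I ⊆ ℝ be an interval and let x be Lipschitz continuous with constant L₀ and values in (-M,M) on an interval containing [t − K, t] for every t ∈ I. Then the map η : I → ℝ, η(t) = t − r(x_t), is strictly increasing on I. -/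
open Set

/-- For the delay implicitly given by two values, `t - η(t) = R(x(t), x(η(t)))`,
along a Lipschitz trajectory `x` with values in `(-M,M)`, the delayed argument
`η(t) = t - r(x_t)` is strictly increasing on the interval `I`. -/
theorem implicit_two_value_delay_eta_strictMono
    (K M L₀ L₁ L₂ : ℝ) (hK : 0 < K) (hM : 0 < M) (hL₀ : 0 < L₀)
    (hL₁ : 0 ≤ L₁) (hL₂ : 0 ≤ L₂) (hLip : L₁ + 2 * L₂ < 1 / L₀)
    (R : ℝ → ℝ → ℝ)
    (hR_range : ∀ u ∈ Icc (-M) M, ∀ v ∈ Icc (-M) M, R u v ∈ Ioc 0 K)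
    (hR_lip1 : ∀ u ∈ Icc (-M) M, ∀ u' ∈ Icc (-M) M, ∀ v ∈ Icc (-M) M,
      |R u v - R u' v| ≤ L₁ * |u - u'|)
    (hR_lip2 : ∀ u ∈ Icc (-M) M, ∀ v ∈ Icc (-M) M, ∀ v' ∈ Icc (-M) M,
      |R u v - R u v'| ≤ L₂ * |v - v'|)
    (I : Set ℝ) (hI : I.OrdConnected)
    (x : ℝ → ℝ)
    (hx_range : ∀ t ∈ I, ∀ s ∈ Icc (t - K) t, x s ∈ Ioo (-M) M)
    (hx_lip : ∀ t ∈ I, ∀ s ∈ Icc (t - K) t, ∀ u ∈ Icc (t - K) t,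
      |x s - x u| ≤ L₀ * |s - u|)
    (η : ℝ → ℝ)
    (hη_range : ∀ t ∈ I, t - η t ∈ Ioc 0 K)
    (hη_fix : ∀ t ∈ I, t - η t = R (x t) (x (η t))) :
    StrictMonoOn η I := by
  intro t₁ ht₁ t₂ ht₂ hlt
  by_contra hcon
  push_neg at hcon
  have hr₁ := hη_range t₁ ht₁
  have hr₂ := hη_range t₂ ht₂
  have ht₁mem : t₁ ∈ Icc (t₂ - K) t₂ := ⟨by linarith [hr₁.1, hr₂.2], le_of_lt hlt⟩
  have hη₁mem : η t₁ ∈ Icc (t₂ - K) t₂ := ⟨by linarith [hr₂.2], by linarith [hr₁.1]⟩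
  have hη₂mem : η t₂ ∈ Icc (t₂ - K) t₂ := ⟨by linarith [hr₂.2], by linarith [hr₂.1]⟩
  have ht₂mem : t₂ ∈ Icc (t₂ - K) t₂ := ⟨by linarith, le_refl _⟩
  have hxt₁ : x t₁ ∈ Icc (-M) M := Ioo_subset_Icc_self (hx_range t₂ ht₂ _ ht₁mem)
  have hxt₂ : x t₂ ∈ Icc (-M) M := Ioo_subset_Icc_self (hx_range t₂ ht₂ _ ht₂mem)
  have hxη₁ : x (η t₁) ∈ Icc (-M) M := Ioo_subset_Icc_self (hx_range t₂ ht₂ _ hη₁mem)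
  have hxη₂ : x (η t₂) ∈ Icc (-M) M := Ioo_subset_Icc_self (hx_range t₂ ht₂ _ hη₂mem)
  have h1 : |R (x t₂) (x (η t₂)) - R (x t₁) (x (η t₂))| ≤ L₁ * |x t₂ - x t₁| :=
    hR_lip1 _ hxt₂ _ hxt₁ _ hxη₂
  have h2 : |R (x t₁) (x (η t₂)) - R (x t₁) (x (η t₁))| ≤ L₂ * |x (η t₂) - x (η t₁)| :=
    hR_lip2 _ hxt₁ _ hxη₂ _ hxη₁
  have hx12 : |x t₂ - x t₁| ≤ L₀ * |t₂ - t₁| := hx_lip t₂ ht₂ _ ht₂mem _ ht₁mem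
  have hxη : |x (η t₂) - x (η t₁)| ≤ L₀ * |η t₂ - η t₁| := hx_lip t₂ ht₂ _ hη₂mem _ hη₁mem
  rw [abs_of_pos (by linarith : (0:ℝ) < t₂ - t₁)] at hx12
  rw [abs_of_nonpos (by linarith : η t₂ - η t₁ ≤ 0)] at hxη
  -- the key difference estimate
  have hfix₁ := hη_fix t₁ ht₁
  have hfix₂ := hη_fix t₂ ht₂
  have hkey : (t₂ - η t₂) - (t₁ - η t₁)
      ≤ L₁ * |x t₂ - x t₁| + L₂ * |x (η t₂) - x (η t₁)| := by
    calc (t₂ - η t₂) - (t₁ - η t₁)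
        = R (x t₂) (x (η t₂)) - R (x t₁) (x (η t₁)) := by rw [hfix₁, hfix₂]
      _ ≤ |R (x t₂) (x (η t₂)) - R (x t₁) (x (η t₁))| := le_abs_self _
      _ ≤ |R (x t₂) (x (η t₂)) - R (x t₁) (x (η t₂))|
            + |R (x t₁) (x (η t₂)) - R (x t₁) (x (η t₁))| := abs_sub_le _ _ _
      _ ≤ L₁ * |x t₂ - x t₁| + L₂ * |x (η t₂) - x (η t₁)| := add_le_add h1 h2
  have hb1 : L₁ * |x t₂ - x t₁| ≤ L₁ * (L₀ * (t₂ - t₁)) :=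
    mul_le_mul_of_nonneg_left hx12 hL₁
  have hb2 : L₂ * |x (η t₂) - x (η t₁)| ≤ L₂ * (L₀ * (-(η t₂ - η t₁))) :=
    mul_le_mul_of_nonneg_left hxη hL₂
  have hmul : L₀ * (L₁ + 2 * L₂) < 1 := by
    have := (mul_lt_mul_of_pos_left hLip hL₀)
    rwa [mul_one_div, div_self (ne_of_gt hL₀)] at this
  have hL₀L₁ : L₀ * L₁ < 1 := by nlinarith [mul_nonneg hL₀.le hL₂]
  have hL₀L₂ : L₀ * L₂ < 1 := by nlinarith [mul_nonneg hL₀.le hL₁, mul_nonneg hL₀.le hL₂]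
  -- final contradiction
  have hd : 0 < t₂ - t₁ := by linarith
  have he : 0 ≤ η t₁ - η t₂ := by linarith
  nlinarith [mul_pos (by linarith : (0:ℝ) < 1 - L₀ * L₁) hd,
    mul_nonneg (by linarith : (0:ℝ) ≤ 1 - L₀ * L₂) he]
end

section
/- Let f ∈ C¹(ℝ²,ℝ) satisfy |f(u,v)| ≤ L₀ for all (u,v) ∈ [-M,M]², y·f(0,y) < 0 for all y ≠ 0, ∂₂f(0,0) < 0, and u·f(u,v) < 0 whenever |u| ≥ max(M,|v|). Let a : [-M,M] → ℝ be Lipschitz continuous with a(ξ) ≥ 1/K for all ξ ∈ [-M,M]. Let x : ℝ → (-M,M) be differentiable and η : ℝ → ℝ satisfy η(t) < t, ∫_{η(t)}^{t} a(x(s)) ds = 1, and x′(t) = f(x(t), x(η(t))) for all t ∈ ℝ. If there exists σ ∈ [η(0), 0] such that x(ηᵏ(σ)) = 0 for every integer k ≥ 0 (where ηᵏ denotes the k-th iterate of η, η⁰(σ) = σ), then x(t) = 0 for all t ∈ ℝ. -/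
open Set Filter Topology

/-!
Integrating `a ∘ x` gives a time change in which `η` becomes the shift by `-1`. Hence `η` is
monotone, its iterates stretch intervals by at most a fixed factor `Λ`, and its orbits tend
to `-∞`. Since `f 0 0 = 0`, `|x'| ≤ C max |x| |x ∘ η|`. If `x` vanishes on the backward orbit
of `z`, then on the windows `[ηᵏ z, ηᵏ (z + h)]`, which `η` maps into one another, the mean
value theorem halves every common bound for `|x|` as soon as `C Λ h ≤ 1 / 2`. So `x` vanishes
on these windows, in particular on the orbit of `z + h`; stepping by `h` gives `x = 0` on
`[z, ∞)`, and `z = ηᵏ σ` with `k` large covers any given time.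
-/

def IsThresholdDelay (φ η : ℝ → ℝ) : Prop :=
  ∀ t, ∫ s in η t..t, φ s = 1

namespace IsThresholdDelay

variable {φ η : ℝ → ℝ}

theorem integral_image (hη : IsThresholdDelay φ η) (hφ : Continuous φ) (c d : ℝ) :
    ∫ s in η c..η d, φ s = ∫ s in c..d, φ s := by
  have hsub := intervalIntegral.integral_interval_sub_interval_comm (μ := MeasureTheory.volume)
    (hφ.intervalIntegrable (η c) c) (hφ.intervalIntegrable (η d) d)
    (hφ.intervalIntegrable (η c) (η d))
  rw [hη, hη, sub_self] at hsub
  linarith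

theorem integral_iterate (hη : IsThresholdDelay φ η) (hφ : Continuous φ) (k : ℕ) (c d : ℝ) :
    ∫ s in η^[k] c..η^[k] d, φ s = ∫ s in c..d, φ s := by
  induction k with
  | zero => rfl
  | succ k ih => rw [Function.iterate_succ_apply', Function.iterate_succ_apply',
      hη.integral_image hφ, ih]

theorem monotone (hη : IsThresholdDelay φ η) (hφ : Continuous φ) (hpos : ∀ s, 0 < φ s) :
    Monotone η := by
  intro c d hcd
  by_contra! hlt
  have hneg : 0 < ∫ s in η d..η c, φ s :=
    intervalIntegral.intervalIntegral_pos_of_pos_on (hφ.intervalIntegrable _ _)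
      (fun s _ => hpos s) hlt
  have hnonneg : 0 ≤ ∫ s in c..d, φ s :=
    intervalIntegral.integral_nonneg hcd fun s _ => (hpos s).le
  rw [intervalIntegral.integral_symm, hη.integral_image hφ] at hneg
  linarith

theorem iterate_sub_iterate_le (hη : IsThresholdDelay φ η) (hφ : Continuous φ) {m A : ℝ}
    (hm : 0 < m) (hφm : ∀ s, m ≤ φ s) (hφA : ∀ s, φ s ≤ A) (k : ℕ) {c d : ℝ} (hcd : c ≤ d) :
    η^[k] d - η^[k] c ≤ A / m * (d - c) := by
  have hmono := (hη.monotone hφ fun s => hm.trans_le (hφm s)).iterate k hcd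
  have hlower : m * (η^[k] d - η^[k] c) ≤ ∫ s in c..d, φ s := by
    rw [← hη.integral_iterate hφ k, mul_comm, ← smul_eq_mul, ← intervalIntegral.integral_const]
    exact intervalIntegral.integral_mono_on hmono intervalIntegrable_const
      (hφ.intervalIntegrable _ _) fun s _ => hφm s
  have hupper : ∫ s in c..d, φ s ≤ A * (d - c) := by
    rw [mul_comm, ← smul_eq_mul, ← intervalIntegral.integral_const]
    exact intervalIntegral.integral_mono_on hcd (hφ.intervalIntegrable _ _)
      intervalIntegrable_const fun s _ => hφA s
  rw [div_mul_eq_mul_div, le_div_iff₀ hm]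
  linarith

theorem tendsto_iterate_atBot (hη : IsThresholdDelay φ η) (hφ : Continuous φ) {A : ℝ}
    (hA : 0 < A) (hφA : ∀ s, φ s ≤ A) (hlt : ∀ t, η t ≤ t) (t : ℝ) :
    Tendsto (fun k : ℕ => η^[k] t) atTop atBot := by
  have hstep : ∀ s, η s ≤ s - 1 / A := by
    intro s
    have h : ∫ r in η s..s, φ r ≤ (s - η s) * A := by
      rw [← smul_eq_mul, ← intervalIntegral.integral_const]
      exact intervalIntegral.integral_mono_on (hlt s) (hφ.intervalIntegrable _ _)
        intervalIntegrable_const fun r _ => hφA r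
    rw [hη s, ← div_le_iff₀ hA] at h
    linarith
  have hiter : ∀ k : ℕ, η^[k] t ≤ t - k / A := by
    intro k
    induction k with
    | zero => simp
    | succ k ih =>
      rw [Function.iterate_succ_apply']
      calc η (η^[k] t) ≤ η^[k] t - 1 / A := hstep _
        _ ≤ t - (k + 1 : ℕ) / A := by push_cast; rw [add_div]; linarith
  refine tendsto_atBot_mono hiter ?_
  simpa only [sub_eq_add_neg, Function.comp_def] using tendsto_atBot_add_const_left _ t
    (tendsto_neg_atTop_atBot.comp (tendsto_natCast_atTop_atTop.atTop_div_const hA))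

end IsThresholdDelay

theorem eq_zero_of_mul_neg {g : ℝ → ℝ} (hg : ContinuousAt g 0) (hneg : ∀ y, y ≠ 0 → y * g y < 0) :
    g 0 = 0 := by
  have hright : ∀ y ∈ Ioi (0 : ℝ), g y ≤ 0 := fun y hy =>
    (neg_of_mul_neg_right (hneg y hy.ne') hy.le).le
  have hleft : ∀ y ∈ Iio (0 : ℝ), 0 ≤ g y := fun y hy =>
    (pos_of_mul_neg_right (hneg y hy.ne) hy.le).le
  exact le_antisymm
    (le_of_tendsto (hg.mono_left nhdsWithin_le_nhds) (eventually_nhdsWithin_of_forall hright))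
    (ge_of_tendsto (hg.mono_left nhdsWithin_le_nhds) (eventually_nhdsWithin_of_forall hleft))

theorem ContDiff.exists_norm_le_mul_norm_of_map_zero {E F : Type*} [NormedAddCommGroup E]
    [NormedSpace ℝ E] [ProperSpace E] [NormedAddCommGroup F] [NormedSpace ℝ F] {g : E → F}
    (hg : ContDiff ℝ 1 g) (hg0 : g 0 = 0) (R : ℝ) :
    ∃ C : NNReal, ∀ z ∈ Metric.closedBall (0 : E) R, ‖g z‖ ≤ C * ‖z‖ := by
  obtain ⟨C, hC⟩ := hg.locallyLipschitz.locallyLipschitzOn.exists_lipschitzOnWith_of_compact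
    (isCompact_closedBall (0 : E) R)
  refine ⟨C, fun z hz => ?_⟩
  simpa [hg0] using hC.dist_le_mul z hz 0 (Metric.mem_closedBall_self (dist_nonneg.trans hz))

section DelayInequality

variable {x g η : ℝ → ℝ} {C M : ℝ}

theorem eqOn_zero_iterate_Icc (hx : ∀ t, HasDerivAt x (g t) t)
    (hg : ∀ t, |g t| ≤ C * max |x t| |x (η t)|) (hC : 0 ≤ C) (hxM : ∀ t, |x t| ≤ M)
    (hη : Monotone η) {z z' L : ℝ} (hlen : ∀ k, η^[k] z' - η^[k] z ≤ L) (hCL : C * L ≤ 1 / 2)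
    (hz : ∀ k, x (η^[k] z) = 0) (k : ℕ) : EqOn x 0 (Icc (η^[k] z) (η^[k] z')) := by
  have hmaps : ∀ k, MapsTo η (Icc (η^[k] z) (η^[k] z')) (Icc (η^[k + 1] z) (η^[k + 1] z')) := by
    intro k s hs
    rw [Function.iterate_succ_apply', Function.iterate_succ_apply']
    exact ⟨hη hs.1, hη hs.2⟩
  have halve : ∀ ε, 0 ≤ ε → (∀ k, ∀ t ∈ Icc (η^[k] z) (η^[k] z'), |x t| ≤ ε) →
      ∀ k, ∀ t ∈ Icc (η^[k] z) (η^[k] z'), |x t| ≤ ε / 2 := by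
    intro ε hε hbound k t ht
    have hderiv : ∀ s ∈ Ico (η^[k] z) t, ‖g s‖ ≤ C * ε := by
      intro s hs
      have hsW : s ∈ Icc (η^[k] z) (η^[k] z') := ⟨hs.1, hs.2.le.trans ht.2⟩
      exact (hg s).trans (mul_le_mul_of_nonneg_left
        (max_le (hbound k s hsW) (hbound (k + 1) _ (hmaps k hsW))) hC)
    have hmvt := norm_image_sub_le_of_norm_deriv_le_segment'
      (fun s _ => (hx s).hasDerivWithinAt) hderiv t ⟨ht.1, le_rfl⟩
    rw [hz k, sub_zero, Real.norm_eq_abs] at hmvt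
    calc |x t| ≤ C * ε * (t - η^[k] z) := hmvt
      _ ≤ C * ε * L := by gcongr; linarith [ht.2, hlen k]
      _ = ε * (C * L) := by ring
      _ ≤ ε / 2 := by nlinarith
  have hpow : ∀ n : ℕ, ∀ k, ∀ t ∈ Icc (η^[k] z) (η^[k] z'), |x t| ≤ M / 2 ^ n := by
    intro n
    induction n with
    | zero => intro k t _; simpa using hxM t
    | succ n ih =>
      rw [pow_succ, ← div_div]
      exact halve _ (div_nonneg ((abs_nonneg _).trans (hxM 0)) (by positivity)) ih
  intro t ht
  have hlim : Tendsto (fun n : ℕ => M / 2 ^ n) atTop (𝓝 0) :=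
    tendsto_const_nhds.div_atTop (tendsto_pow_atTop_atTop_of_one_lt one_lt_two)
  exact abs_nonpos_iff.mp (ge_of_tendsto' hlim fun n => hpow n k t ht)

theorem eqOn_zero_Ici_of_iterate_eq_zero (hx : ∀ t, HasDerivAt x (g t) t)
    (hg : ∀ t, |g t| ≤ C * max |x t| |x (η t)|) (hC : 0 ≤ C) (hxM : ∀ t, |x t| ≤ M)
    (hη : Monotone η) {Λ : ℝ} (hΛ : 0 ≤ Λ)
    (hlen : ∀ k {c d}, c ≤ d → η^[k] d - η^[k] c ≤ Λ * (d - c)) {z : ℝ}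
    (hz : ∀ k, x (η^[k] z) = 0) : EqOn x 0 (Ici z) := by
  set h := 1 / (2 * (C * Λ + 1))
  have hh : 0 < h := by positivity
  have hCh : C * (Λ * h) ≤ 1 / 2 := by
    rw [← mul_assoc, mul_one_div, div_le_div_iff₀ (by positivity) two_pos]
    nlinarith [mul_nonneg hC hΛ]
  have hstep : ∀ w, (∀ k, x (η^[k] w) = 0) → ∀ k, EqOn x 0 (Icc (η^[k] w) (η^[k] (w + h))) :=
    fun w hw => eqOn_zero_iterate_Icc hx hg hC hxM hη
      (fun k => by simpa using hlen k (le_add_of_nonneg_right hh.le)) hCh hw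
  have horbit : ∀ n : ℕ, ∀ k, x (η^[k] (z + n * h)) = 0 := by
    intro n
    induction n with
    | zero => simpa using hz
    | succ n ih =>
      intro k
      rw [Nat.cast_succ, add_one_mul, ← add_assoc]
      exact hstep _ ih k ⟨hη.iterate k (le_add_of_nonneg_right hh.le), le_rfl⟩
  intro t ht
  set n := ⌊(t - z) / h⌋₊
  have hn : n * h ≤ t - z := (le_div_iff₀ hh).mp (Nat.floor_le (div_nonneg (sub_nonneg.2 ht) hh.le))
  have hn' : t - z < (n + 1) * h := (div_lt_iff₀ hh).mp (Nat.lt_floor_add_one _)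
  exact hstep _ (horbit n) 0
    (by simp only [Function.iterate_zero_apply, mem_Icc]; constructor <;> linarith)

end DelayInequality

theorem threshold_delay_iterated_zeros_imply_zero_general
    (K M : ℝ) (hK : 0 < K)
    (f : ℝ → ℝ → ℝ) (hf : ContDiff ℝ 1 (Function.uncurry f))
    (hf_neg : ∀ y : ℝ, y ≠ 0 → y * f 0 y < 0)
    (a : ℝ → ℝ)
    (ha_lip : ∃ La : ℝ, 0 ≤ La ∧ ∀ ξ ∈ Icc (-M) M, ∀ ζ ∈ Icc (-M) M,
      |a ξ - a ζ| ≤ La * |ξ - ζ|)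
    (ha_lb : ∀ ξ ∈ Icc (-M) M, 1 / K ≤ a ξ)
    (x : ℝ → ℝ) (hx_range : ∀ t, x t ∈ Ioo (-M) M)
    (η : ℝ → ℝ)
    (hη_lt : ∀ t, η t < t)
    (hη_int : ∀ t, (∫ s in (η t)..t, a (x s)) = 1)
    (hx_ode : ∀ t, HasDerivAt x (f (x t) (x (η t))) t)
    (σ : ℝ)
    (hzero : ∀ k : ℕ, x (η^[k] σ) = 0) :
    ∀ t : ℝ, x t = 0 := by
  obtain ⟨La, hLa0, hLa⟩ := ha_lip
  have hx_mem : ∀ t, x t ∈ Icc (-M) M := fun t => Ioo_subset_Icc_self (hx_range t)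
  have hxM : ∀ t, |x t| ≤ M := fun t => abs_le.2 (hx_mem t)
  have hx_cont : Continuous x := continuous_iff_continuousAt.2 fun t => (hx_ode t).continuousAt
  have ha_cont : ContinuousOn a (Icc (-M) M) :=
    (LipschitzOnWith.of_dist_le_mul (K := ⟨La, hLa0⟩) hLa).continuousOn
  obtain ⟨A, hA⟩ := isCompact_Icc.bddAbove_image ha_cont
  have hφ : Continuous fun s => a (x s) := ha_cont.comp_continuous hx_cont hx_mem
  have hφK : ∀ s, 1 / K ≤ a (x s) := fun s => ha_lb _ (hx_mem s)
  have hφA : ∀ s, a (x s) ≤ A := fun s => hA (mem_image_of_mem a (hx_mem s))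
  have hK' : 0 < 1 / K := one_div_pos.2 hK
  have hA0 : 0 < A := hK'.trans_le ((hφK 0).trans (hφA 0))
  have hη : IsThresholdDelay (fun s => a (x s)) η := hη_int
  obtain ⟨C, hC⟩ := hf.exists_norm_le_mul_norm_of_map_zero
    (eq_zero_of_mul_neg (hf.continuous.comp (Continuous.prodMk_right 0)).continuousAt hf_neg) M
  have hg : ∀ t, |f (x t) (x (η t))| ≤ C * max |x t| |x (η t)| := fun t => by
    simpa using hC (x t, x (η t)) (by simpa using ⟨hxM t, hxM (η t)⟩)
  intro t
  obtain ⟨k, hk⟩ := ((hη.tendsto_iterate_atBot hφ hA0 hφA (fun s => (hη_lt s).le)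
    σ).eventually_le_atBot t).exists
  refine eqOn_zero_Ici_of_iterate_eq_zero hx_ode hg C.2 hxM
    (hη.monotone hφ fun s => hK'.trans_le (hφK s)) (by positivity)
    (hη.iterate_sub_iterate_le hφ hK' hφK hφA) (fun j => ?_) hk
  rw [← Function.iterate_add_apply]
  exact hzero _

/-- For the state-dependent delay equation `x′(t) = f(x(t), x(η(t)))` with
threshold-type delay `∫_{η(t)}^t a(x(s)) ds = 1`: if along an entire solution `x`
there is a point `σ ∈ [η(0),0]` all of whose backward iterates `ηᵏ(σ)` are zeros of
`x`, then `x` is identically zero. -/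
theorem threshold_delay_iterated_zeros_imply_zero
    (K M L₀ : ℝ) (hK : 0 < K) (hM : 0 < M) (hL₀ : 0 < L₀)
    (f : ℝ → ℝ → ℝ) (hf : ContDiff ℝ 1 (Function.uncurry f))
    (hf_bdd : ∀ u ∈ Icc (-M) M, ∀ v ∈ Icc (-M) M, |f u v| ≤ L₀)
    (hf_neg : ∀ y : ℝ, y ≠ 0 → y * f 0 y < 0)
    (hf_d2 : deriv (fun y => f 0 y) 0 < 0)
    (hf_dissip : ∀ u v : ℝ, max M |v| ≤ |u| → u * f u v < 0)
    (a : ℝ → ℝ)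
    (ha_lip : ∃ La : ℝ, 0 ≤ La ∧ ∀ ξ ∈ Icc (-M) M, ∀ ζ ∈ Icc (-M) M,
      |a ξ - a ζ| ≤ La * |ξ - ζ|)
    (ha_lb : ∀ ξ ∈ Icc (-M) M, 1 / K ≤ a ξ)
    (x : ℝ → ℝ) (hx_range : ∀ t, x t ∈ Ioo (-M) M)
    (η : ℝ → ℝ)
    (hη_lt : ∀ t, η t < t)
    (hη_int : ∀ t, (∫ s in (η t)..t, a (x s)) = 1)
    (hx_ode : ∀ t, HasDerivAt x (f (x t) (x (η t))) t)
    (σ : ℝ) (hσ : σ ∈ Icc (η 0) 0)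
    (hzero : ∀ k : ℕ, x (η^[k] σ) = 0) :
    ∀ t : ℝ, x t = 0 :=
  threshold_delay_iterated_zeros_imply_zero_general K M hK f hf hf_neg a ha_lip ha_lb x hx_range η
    hη_lt hη_int hx_ode σ hzero
end

section
/- Let a : [-M,M] → (0,∞) be continuous, x : ℝ → (-M,M) continuous, and η : ℝ → ℝ satisfy η(t) < t and ∫_{η(t)}^{t} a(x(s)) ds = 1 for all t ∈ ℝ. Then η is differentiable on ℝ and η′(t) = a(x(t)) / a(x(η(t))) > 0 for all t ∈ ℝ. -/
open Set Filter Topology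

/-!
With `F u = ∫₀ᵘ a(x(s)) ds`, the defining relation of the delay reads `F (η t) = F t - 1`.
Since `a ∘ x` is continuous and positive, `F` is injective with nonvanishing strict derivative,
so `η` agrees near `t` with a local inverse of `F` applied to `F - 1`; the chain rule and the
inverse function theorem give `η′(t) = F′(t) / F′(η t)`.
-/

theorem HasDerivAt.of_comp_eq_of_injective {𝕜 : Type*} [NontriviallyNormedField 𝕜]
    [CompleteSpace 𝕜] {F g η : 𝕜 → 𝕜} {F' g' t : 𝕜} (hinj : Function.Injective F)
    (hF : HasStrictDerivAt F F' (η t)) (hF' : F' ≠ 0) (hg : HasDerivAt g g' t)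
    (hcomp : ∀ s, F (η s) = g s) : HasDerivAt η (g' / F') t := by
  set G := hF.localInverse F F' (η t) hF'
  have hG : HasDerivAt G F'⁻¹ (g t) := hcomp t ▸ (hF.to_localInverse hF').hasDerivAt
  have hη_eq : G ∘ g =ᶠ[𝓝 t] η := by
    have hright : ∀ᶠ y in 𝓝 (g t), F (G y) = y := hcomp t ▸ hF.eventually_right_inverse hF'
    filter_upwards [hg.continuousAt.eventually hright] with s hs
    exact hinj (hs.trans (hcomp s).symm)
  rw [div_eq_inv_mul]
  exact (hG.comp t hg).congr_of_eventuallyEq hη_eq.symm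

theorem hasDerivAt_of_integral_eq_const {f η : ℝ → ℝ} {c : ℝ} (hf : Continuous f)
    (hf_pos : ∀ s, 0 < f s) (hη : ∀ t, ∫ s in η t..t, f s = c) (t : ℝ) :
    HasDerivAt η (f t / f (η t)) t := by
  set F : ℝ → ℝ := fun u => ∫ s in (0 : ℝ)..u, f s
  have hF : ∀ u, HasStrictDerivAt F (f u) u := fun u => hf.integral_hasStrictDerivAt 0 u
  have hF_mono : StrictMono F := strictMono_of_hasDerivAt_pos (fun u => (hF u).hasDerivAt) hf_pos
  have hcomp : ∀ s, F (η s) = F s - c := fun s => by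
    rw [← hη s, ← intervalIntegral.integral_interval_sub_left
      (hf.intervalIntegrable 0 s) (hf.intervalIntegrable 0 (η s)), sub_sub_cancel]
  exact HasDerivAt.of_comp_eq_of_injective hF_mono.injective (hF (η t)) (hf_pos (η t)).ne'
    ((hF t).hasDerivAt.sub_const c) hcomp

theorem threshold_delay_eta_differentiable_general
    (M : ℝ)
    (a : ℝ → ℝ) (ha_cont : ContinuousOn a (Icc (-M) M))
    (ha_pos : ∀ ξ ∈ Icc (-M) M, 0 < a ξ)
    (x : ℝ → ℝ) (hx_cont : Continuous x)
    (hx_range : ∀ t, x t ∈ Ioo (-M) M)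
    (η : ℝ → ℝ)
    (hη_int : ∀ t, (∫ s in (η t)..t, a (x s)) = 1) :
    ∀ t : ℝ, HasDerivAt η (a (x t) / a (x (η t))) t ∧ 0 < a (x t) / a (x (η t)) := by
  have hx_mem : ∀ s, x s ∈ Icc (-M) M := fun s => Ioo_subset_Icc_self (hx_range s)
  have hax_cont : Continuous fun s => a (x s) := ha_cont.comp_continuous hx_cont hx_mem
  have hax_pos : ∀ s, 0 < a (x s) := fun s => ha_pos _ (hx_mem s)
  exact fun t => ⟨hasDerivAt_of_integral_eq_const hax_cont hax_pos hη_int t,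
    div_pos (hax_pos t) (hax_pos (η t))⟩

/-- For the threshold-type delay, determined by `∫_{η(t)}^t a(x(s)) ds = 1` with
`η(t) < t` along a continuous trajectory `x` with values in `(-M,M)`, the map `η`
is differentiable with `η′(t) = a(x(t)) / a(x(η(t))) > 0` for all `t`. -/
theorem threshold_delay_eta_differentiable
    (M : ℝ) (hM : 0 < M)
    (a : ℝ → ℝ) (ha_cont : ContinuousOn a (Icc (-M) M))
    (ha_pos : ∀ ξ ∈ Icc (-M) M, 0 < a ξ)
    (x : ℝ → ℝ) (hx_cont : Continuous x)
    (hx_range : ∀ t, x t ∈ Ioo (-M) M)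
    (η : ℝ → ℝ)
    (hη_lt : ∀ t, η t < t)
    (hη_int : ∀ t, (∫ s in (η t)..t, a (x s)) = 1) :
    ∀ t : ℝ, HasDerivAt η (a (x t) / a (x (η t))) t ∧ 0 < a (x t) / a (x (η t)) :=
  threshold_delay_eta_differentiable_general M a ha_cont ha_pos x hx_cont hx_range η hη_int
end

section
/- Let f : ℝ² → ℝ be Lipschitz continuous on [-M,M]² with Lipschitz constant Lip(f) (with respect to the maximum metric on ℝ²), and let r : X → (0,K] be Lipschitz continuous with constant Lip(r) with respect to the sup norm. Define F : X → ℝ by F(φ) = f(φ(0), φ(−r(φ))). Then for all φ, ψ ∈ X, |F(φ) − F(ψ)| ≤ Lip(f)·(2 + L₀·Lip(r))·‖φ − ψ‖. -/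
open Set

/-- The right-hand side `F(φ) = f(φ(0), φ(-r(φ)))` of the state-dependent delay
equation is Lipschitz continuous on the phase space, with Lipschitz constant at most
`Lip(f)·(2 + L₀·Lip(r))`. -/
theorem rhs_lipschitz
    (K M L₀ Lf Lr : ℝ) (hK : 0 < K) (hM : 0 < M) (hL₀ : 0 < L₀)
    (hLf : 0 ≤ Lf) (hLr : 0 ≤ Lr)
    (f : ℝ → ℝ → ℝ)
    (hf_lip : ∀ u ∈ Icc (-M) M, ∀ v ∈ Icc (-M) M, ∀ u' ∈ Icc (-M) M, ∀ v' ∈ Icc (-M) M,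
      |f u v - f u' v'| ≤ Lf * max |u - u'| |v - v'|)
    (r : (ℝ → ℝ) → ℝ)
    (hr_range : ∀ φ : ℝ → ℝ, memX K M L₀ φ → r φ ∈ Ioc 0 K)
    (hr_lip : ∀ φ ψ : ℝ → ℝ, memX K M L₀ φ → memX K M L₀ ψ →
      |r φ - r ψ| ≤ Lr * ⨆ s : Icc (-K) (0 : ℝ), |φ (s : ℝ) - ψ (s : ℝ)|) :
    ∀ φ ψ : ℝ → ℝ, memX K M L₀ φ → memX K M L₀ ψ →
      |f (φ 0) (φ (-r φ)) - f (ψ 0) (ψ (-r ψ))| ≤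
        Lf * (2 + L₀ * Lr) * ⨆ s : Icc (-K) (0 : ℝ), |φ (s : ℝ) - ψ (s : ℝ)| := by
  intro φ ψ hφ hψ
  obtain ⟨hφc, hφM, hφL⟩ := hφ
  obtain ⟨hψc, hψM, hψL⟩ := hψ
  set S := ⨆ s : Icc (-K) (0 : ℝ), |φ (s : ℝ) - ψ (s : ℝ)| with hSdef
  have h0K : (0 : ℝ) ∈ Icc (-K) (0 : ℝ) := ⟨by linarith, le_refl 0⟩
  have hrφ := hr_range φ ⟨hφc, hφM, hφL⟩
  have hrψ := hr_range ψ ⟨hψc, hψM, hψL⟩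
  have hmφ : -r φ ∈ Icc (-K) (0 : ℝ) := ⟨by linarith [hrφ.2], by linarith [hrφ.1]⟩
  have hmψ : -r ψ ∈ Icc (-K) (0 : ℝ) := ⟨by linarith [hrψ.2], by linarith [hrψ.1]⟩
  have hbdd : BddAbove (range fun s : Icc (-K) (0 : ℝ) => |φ (s : ℝ) - ψ (s : ℝ)|) := by
    refine ⟨2 * M, ?_⟩
    rintro x ⟨s, rfl⟩
    have h1 := hφM s s.2
    have h2 := hψM s s.2
    have := abs_sub (φ (s : ℝ)) (ψ (s : ℝ))
    simp only
    linarith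
  have hle : ∀ t ∈ Icc (-K) (0 : ℝ), |φ t - ψ t| ≤ S := by
    intro t ht
    exact le_ciSup hbdd ⟨t, ht⟩
  have hS0 : 0 ≤ S := le_trans (abs_nonneg _) (hle 0 h0K)
  have hMmem : ∀ (g : ℝ → ℝ), (∀ s ∈ Set.Icc (-K) (0:ℝ), |g s| < M) →
      ∀ t ∈ Icc (-K) (0 : ℝ), g t ∈ Icc (-M) M := by
    intro g hg t ht
    have := hg t ht
    constructor <;> [linarith [neg_abs_le (g t)]; linarith [le_abs_self (g t)]]
  have hr_est := hr_lip φ ψ ⟨hφc, hφM, hφL⟩ ⟨hψc, hψM, hψL⟩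
  have key : |φ (-r φ) - ψ (-r ψ)| ≤ (1 + L₀ * Lr) * S := by
    have h1 : |φ (-r φ) - φ (-r ψ)| ≤ L₀ * |(-r φ) - (-r ψ)| := hφL _ hmφ _ hmψ
    have h2 : |φ (-r ψ) - ψ (-r ψ)| ≤ S := hle _ hmψ
    have h3 : |(-r φ) - (-r ψ)| = |r φ - r ψ| := by rw [← abs_neg]; ring_nf
    have h4 : L₀ * |r φ - r ψ| ≤ L₀ * (Lr * S) :=
      mul_le_mul_of_nonneg_left hr_est (le_of_lt hL₀)
    calc |φ (-r φ) - ψ (-r ψ)| ≤ |φ (-r φ) - φ (-r ψ)| + |φ (-r ψ) - ψ (-r ψ)| :=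
          abs_sub_le _ _ _
      _ ≤ L₀ * (Lr * S) + S := by rw [h3] at h1; linarith
      _ = (1 + L₀ * Lr) * S := by ring
  have hf := hf_lip (φ 0) (hMmem φ hφM 0 h0K) (φ (-r φ)) (hMmem φ hφM _ hmφ)
    (ψ 0) (hMmem ψ hψM 0 h0K) (ψ (-r ψ)) (hMmem ψ hψM _ hmψ)
  have hmax : max |φ 0 - ψ 0| |φ (-r φ) - ψ (-r ψ)| ≤ (2 + L₀ * Lr) * S := by
    apply max_le
    · calc |φ 0 - ψ 0| ≤ S := hle 0 h0K
        _ ≤ (2 + L₀ * Lr) * S := by nlinarith [mul_nonneg (mul_nonneg hL₀.le hLr) hS0]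
    · calc |φ (-r φ) - ψ (-r ψ)| ≤ (1 + L₀ * Lr) * S := key
        _ ≤ (2 + L₀ * Lr) * S := by nlinarith [mul_nonneg (mul_nonneg hL₀.le hLr) hS0]
  calc |f (φ 0) (φ (-r φ)) - f (ψ 0) (ψ (-r ψ))|
      ≤ Lf * max |φ 0 - ψ 0| |φ (-r φ) - ψ (-r ψ)| := hf
    _ ≤ Lf * ((2 + L₀ * Lr) * S) := mul_le_mul_of_nonneg_left hmax hLf
    _ = Lf * (2 + L₀ * Lr) * S := by ring
end

section
/- Let δ ∈ (0, M) and let f : ℝ² → ℝ be continuous with u·f(u,v) < 0 for all (u,v) ∈ ℝ² with |u| ≥ max(M − δ, |v|). Let α > 0, let x : [-K, α) → ℝ be continuous and differentiable on (0, α), let η : (0, α) → ℝ satisfy t − K ≤ η(t) < t for all t ∈ (0,α), and suppose x′(t) = f(x(t), x(η(t))) for all t ∈ (0, α). If |x(s)| ≤ M − δ for all s ∈ [-K, 0], then |x(t)| ≤ M − δ for all t ∈ [0, α). -/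
open Set

/-- If `g` has negative derivative at `t`, then there are points `s < t`
arbitrarily close to `t` with `g s > g t`. -/
lemma exists_left_gt_of_hasDerivAt_neg {g : ℝ → ℝ} {t L : ℝ}
    (hg : HasDerivAt g L t) (hL : L < 0) {a : ℝ} (ha : a < t) :
    ∃ s ∈ Ioo a t, g t < g s := by
  have hslope := hasDerivAt_iff_tendsto_slope.mp hg
  have h1 : ∀ᶠ s in nhdsWithin t (Iio t), slope g t s < 0 := by
    have h0 : ∀ᶠ s in nhdsWithin t {t}ᶜ, slope g t s < 0 :=
      hslope.eventually (gt_mem_nhds hL)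
    exact h0.filter_mono (nhdsWithin_mono t (fun s hs => ne_of_lt hs))
  have h2 : Ioo a t ∈ nhdsWithin t (Iio t) := Ioo_mem_nhdsLT_of_mem ⟨ha, le_refl t⟩
  obtain ⟨s, hs1, hs2⟩ := (h1.and (Filter.eventually_iff_exists_mem.mpr ⟨Ioo a t, h2, fun s hs => hs⟩)).exists
  refine ⟨s, hs2, ?_⟩
  have hst : s - t < 0 := sub_neg.mpr hs2.2
  have : (g s - g t) / (s - t) < 0 := by
    simpa [slope, div_eq_inv_mul] using hs1
  have := (div_neg_iff.mp this)
  rcases this with ⟨h, h'⟩ | ⟨h, h'⟩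
  · linarith
  · linarith

/-- Dissipativity: if `u·f(u,v) < 0` whenever `|u| ≥ max(M-δ, |v|)`, then a solution
of the delay equation `x′(t) = f(x(t), x(η(t)))` that starts with `|x| ≤ M - δ` on
the initial interval `[-K,0]` satisfies `|x(t)| ≤ M - δ` for all `t ∈ [0,α)`. -/
theorem dissipativity_invariance
    (K M δ α : ℝ) (hK : 0 < K) (hδ : δ ∈ Ioo 0 M) (hα : 0 < α)
    (f : ℝ → ℝ → ℝ) (hf_cont : Continuous (Function.uncurry f))
    (hf_dissip : ∀ u v : ℝ, max (M - δ) |v| ≤ |u| → u * f u v < 0)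
    (x : ℝ → ℝ) (hx_cont : ContinuousOn x (Ico (-K) α))
    (η : ℝ → ℝ)
    (hη_lb : ∀ t ∈ Ioo 0 α, t - K ≤ η t)
    (hη_lt : ∀ t ∈ Ioo 0 α, η t < t)
    (hx_ode : ∀ t ∈ Ioo 0 α, HasDerivAt x (f (x t) (x (η t))) t)
    (h_init : ∀ s ∈ Icc (-K) 0, |x s| ≤ M - δ) :
    ∀ t ∈ Ico 0 α, |x t| ≤ M - δ := by
  by_contra h
  push_neg at h
  obtain ⟨t₁, ht₁, hgt⟩ := h
  have hKneg : (-K : ℝ) < 0 := neg_neg_of_pos hK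
  have hsub : Icc (-K) t₁ ⊆ Ico (-K) α := Icc_subset_Ico_right ht₁.2
  have hcompact : IsCompact (Icc (-K) t₁) := isCompact_Icc
  have hne : (Icc (-K) t₁).Nonempty := ⟨0, le_of_lt hKneg, ht₁.1⟩
  have hcont : ContinuousOn (fun s => |x s|) (Icc (-K) t₁) :=
    (hx_cont.mono hsub).abs
  obtain ⟨t₂, ht₂mem, ht₂max⟩ := hcompact.exists_isMaxOn hne hcont
  have hmax : ∀ s ∈ Icc (-K) t₁, |x s| ≤ |x t₂| := ht₂max
  have hxt₂ : M - δ < |x t₂| :=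
    lt_of_lt_of_le hgt (hmax t₁ ⟨le_trans (le_of_lt hKneg) ht₁.1, le_refl t₁⟩)
  have ht₂pos : 0 < t₂ := by
    by_contra hle
    push_neg at hle
    exact absurd (h_init t₂ ⟨ht₂mem.1, hle⟩) (not_le.mpr hxt₂)
  have ht₂α : t₂ ∈ Ioo 0 α := ⟨ht₂pos, lt_of_le_of_lt ht₂mem.2 ht₁.2⟩
  have hηmem : η t₂ ∈ Icc (-K) t₁ := by
    constructor
    · have := hη_lb t₂ ht₂α
      linarith
    · exact le_of_lt (lt_of_lt_of_le (hη_lt t₂ ht₂α) ht₂mem.2)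
  have hv : |x (η t₂)| ≤ |x t₂| := hmax _ hηmem
  have hdissip : x t₂ * f (x t₂) (x (η t₂)) < 0 :=
    hf_dissip _ _ (max_le (le_of_lt hxt₂) hv)
  have hder : HasDerivAt (fun t => x t * x t)
      (f (x t₂) (x (η t₂)) * x t₂ + x t₂ * f (x t₂) (x (η t₂))) t₂ :=
    (hx_ode t₂ ht₂α).mul (hx_ode t₂ ht₂α)
  have hL : f (x t₂) (x (η t₂)) * x t₂ + x t₂ * f (x t₂) (x (η t₂)) < 0 := by
    nlinarith
  obtain ⟨s, hs, hgs⟩ := exists_left_gt_of_hasDerivAt_neg hder hL ht₂pos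
  have hsmem : s ∈ Icc (-K) t₁ :=
    ⟨le_of_lt (lt_trans hKneg hs.1), le_of_lt (lt_of_lt_of_le hs.2 ht₂mem.2)⟩
  have : |x s| ≤ |x t₂| := hmax s hsmem
  nlinarith [abs_nonneg (x s), abs_nonneg (x t₂), sq_abs (x s), sq_abs (x t₂)]
end

section
/- Let f ∈ C¹(ℝ²,ℝ) satisfy y·f(0,y) < 0 for all y ≠ 0 and ∂₂f(0,0) < 0 (so that f(0,0) = 0). Let x : ℝ → (-M,M) be differentiable, let η : ℝ → ℝ be continuous, and suppose x′(t) = f(x(t), x(η(t))) for all t ∈ ℝ. Define a(t) = ∫₀¹ ∂₁f(s·x(t), x(η(t))) ds and b(t) = ∫₀¹ ∂₂f(0, s·x(η(t))) ds. Then a and b are continuous, x′(t) = a(t)·x(t) + b(t)·x(η(t)) for all t ∈ ℝ, and there exist constants a₀ > 0 and 0 < b₀ ≤ b₁, depending only on f and M, such that |a(t)| ≤ a₀ and −b₁ ≤ b(t) ≤ −b₀ < 0 for all t ∈ ℝ. -/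
open Set MeasureTheory

/-!
Hadamard's lemma `φ X - φ 0 = (∫₀¹ φ'(s X) ds) · X`, applied to `u ↦ f u y` and to
`v ↦ f 0 v`, splits `f (x, y) = (f (x, y) - f (0, y)) + (f (0, y) - f (0, 0))` into the terms
`a x` and `b y` (the sign condition forces `f (0, 0) = 0`). The coefficients are continuous as
parametric integrals, and bounded because the partial derivatives are continuous on the compact
square `[-M, M]²`. The same lemma gives `b(y) · y² = y f (0, y) < 0` for `y ≠ 0`, while
`b(0) = ∂₂f(0, 0) < 0`; so the continuous function `y ↦ ∫₀¹ ∂₂f(0, s y) ds` is negative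
everywhere and hence bounded away from `0` on `[-M, M]`.
-/

theorem sub_eq_integral_deriv_mul {φ : ℝ → ℝ} (hφ : ContDiff ℝ 1 φ) (X : ℝ) :
    φ X - φ 0 = (∫ s in (0:ℝ)..1, deriv φ (s * X)) * X := by
  have hderiv : ∀ s ∈ uIcc (0:ℝ) 1,
      HasDerivAt (fun s => φ (s * X)) (deriv φ (s * X) * X) s := fun s _ =>
    ((hφ.differentiable one_ne_zero).differentiableAt.hasDerivAt).comp s (hasDerivAt_mul_const X)
  have hint : IntervalIntegrable (fun s => deriv φ (s * X) * X) volume 0 1 :=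
    (((hφ.continuous_deriv le_rfl).comp (continuous_mul_const X)).mul
      continuous_const).intervalIntegrable 0 1
  rw [← intervalIntegral.integral_mul_const,
    intervalIntegral.integral_eq_sub_of_hasDerivAt hderiv hint]
  simp

theorem eq_zero_of_forall_mul_neg {φ : ℝ → ℝ} (hφ : ContinuousAt φ 0)
    (hneg : ∀ y, y ≠ 0 → y * φ y < 0) : φ 0 = 0 := by
  have hle : φ 0 ≤ 0 := by
    refine le_of_tendsto (hφ.mono_left (nhdsWithin_le_nhds (s := Ioi 0))) ?_
    filter_upwards [self_mem_nhdsWithin] with y (hy : 0 < y)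
    exact nonpos_of_mul_nonpos_right (hneg y hy.ne').le hy
  have hge : 0 ≤ φ 0 := by
    refine ge_of_tendsto (hφ.mono_left (nhdsWithin_le_nhds (s := Iio 0))) ?_
    filter_upwards [self_mem_nhdsWithin] with y (hy : y < 0)
    exact nonneg_of_mul_nonpos_right (hneg y hy.ne).le hy
  exact le_antisymm hle hge

theorem integral_deriv_mul_neg {φ : ℝ → ℝ} (hφ : ContDiff ℝ 1 φ)
    (hneg : ∀ y, y ≠ 0 → y * φ y < 0) (hφ' : deriv φ 0 < 0) (v : ℝ) :
    ∫ s in (0:ℝ)..1, deriv φ (s * v) < 0 := by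
  rcases eq_or_ne v 0 with rfl | hv
  · simpa using hφ'
  · have hφv : φ v = (∫ s in (0:ℝ)..1, deriv φ (s * v)) * v := by
      simpa [eq_zero_of_forall_mul_neg hφ.continuous.continuousAt hneg] using
        sub_eq_integral_deriv_mul hφ v
    have := hneg v hv
    rw [hφv] at this
    nlinarith [mul_self_pos.2 hv]

theorem IsCompact.exists_neg_bounds {K : Set ℝ} (hK : IsCompact K) {G : ℝ → ℝ}
    (hG : ContinuousOn G K) (hneg : ∀ v ∈ K, G v < 0) :
    ∃ b₀ b₁ : ℝ, 0 < b₀ ∧ b₀ ≤ b₁ ∧ ∀ v ∈ K, -b₁ ≤ G v ∧ G v ≤ -b₀ := by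
  rcases K.eq_empty_or_nonempty with rfl | hne
  · exact ⟨1, 1, one_pos, le_rfl, by simp⟩
  obtain ⟨vmax, hvmax, hmax⟩ := hK.exists_isMaxOn hne hG
  obtain ⟨vmin, -, hmin⟩ := hK.exists_isMinOn hne hG
  exact ⟨-G vmax, -G vmin, neg_pos.2 (hneg vmax hvmax), neg_le_neg (hmin hvmax),
    fun v hv => ⟨by simpa using hmin hv, by simpa using hmax hv⟩⟩

section PartialDerivatives

variable {f : ℝ → ℝ → ℝ}

theorem hasDerivAt_partial_fst (hf : Differentiable ℝ (Function.uncurry f)) (u v : ℝ) :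
    HasDerivAt (fun u => f u v) (fderiv ℝ (Function.uncurry f) (u, v) (1, 0)) u :=
  (hf (u, v)).hasFDerivAt.comp_hasDerivAt (f := fun u => (u, v)) u
    ((hasDerivAt_id u).prodMk (hasDerivAt_const u v))

theorem hasDerivAt_partial_snd (hf : Differentiable ℝ (Function.uncurry f)) (u v : ℝ) :
    HasDerivAt (fun v => f u v) (fderiv ℝ (Function.uncurry f) (u, v) (0, 1)) v :=
  (hf (u, v)).hasFDerivAt.comp_hasDerivAt (f := fun v => (u, v)) v
    ((hasDerivAt_const v u).prodMk (hasDerivAt_id v))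

theorem continuous_deriv_partial_fst (hf : ContDiff ℝ 1 (Function.uncurry f)) :
    Continuous fun p : ℝ × ℝ => deriv (fun u => f u p.2) p.1 := by
  have hdiff := hf.differentiable one_ne_zero
  simp_rw [fun p : ℝ × ℝ => (hasDerivAt_partial_fst hdiff p.1 p.2).deriv]
  exact (hf.continuous_fderiv one_ne_zero).clm_apply continuous_const

theorem continuous_deriv_partial_snd (hf : ContDiff ℝ 1 (Function.uncurry f)) :
    Continuous fun p : ℝ × ℝ => deriv (fun v => f p.1 v) p.2 := by
  have hdiff := hf.differentiable one_ne_zero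
  simp_rw [fun p : ℝ × ℝ => (hasDerivAt_partial_snd hdiff p.1 p.2).deriv]
  exact (hf.continuous_fderiv one_ne_zero).clm_apply continuous_const

theorem contDiff_partial_fst (hf : ContDiff ℝ 1 (Function.uncurry f)) (v : ℝ) :
    ContDiff ℝ 1 fun u => f u v :=
  hf.comp (contDiff_id.prodMk contDiff_const)

theorem contDiff_partial_snd (hf : ContDiff ℝ 1 (Function.uncurry f)) (u : ℝ) :
    ContDiff ℝ 1 fun v => f u v :=
  hf.comp (contDiff_const.prodMk contDiff_id)

theorem exists_abs_integral_deriv_partial_fst_le (hf : ContDiff ℝ 1 (Function.uncurry f))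
    (M : ℝ) : ∃ a₀ : ℝ, 0 < a₀ ∧ ∀ X ∈ Icc (-M) M, ∀ Y ∈ Icc (-M) M,
      |∫ s in (0:ℝ)..1, deriv (fun u => f u Y) (s * X)| ≤ a₀ := by
  obtain ⟨C, hC⟩ := (isCompact_Icc.prod isCompact_Icc).exists_bound_of_continuousOn
    (continuous_deriv_partial_fst hf).continuousOn (s := Icc (-M) M ×ˢ Icc (-M) M)
  refine ⟨max C 1, by positivity, fun X hX Y hY => ?_⟩
  have hbound : ∀ s ∈ uIoc (0:ℝ) 1, ‖deriv (fun u => f u Y) (s * X)‖ ≤ max C 1 := by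
    intro s hs
    rw [uIoc_of_le zero_le_one] at hs
    have hsX : s * X ∈ Icc (-M) M := by
      rw [mem_Icc, ← abs_le] at hX ⊢
      rw [abs_mul, abs_of_pos hs.1]
      exact (mul_le_of_le_one_left (abs_nonneg X) hs.2).trans hX
    exact (hC (s * X, Y) ⟨hsX, hY⟩).trans (le_max_left C 1)
  simpa using intervalIntegral.norm_integral_le_of_norm_le_const hbound

end PartialDerivatives

theorem linear_decomposition_along_solution_general
    (M : ℝ)
    (f : ℝ → ℝ → ℝ) (hf : ContDiff ℝ 1 (Function.uncurry f))
    (hf_neg : ∀ y : ℝ, y ≠ 0 → y * f 0 y < 0)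
    (hf_d2 : deriv (fun y => f 0 y) 0 < 0)
    (x η : ℝ → ℝ)
    (hη_cont : Continuous η)
    (hx_ode : ∀ t, HasDerivAt x (f (x t) (x (η t))) t) :
    Continuous (fun t => ∫ s in (0:ℝ)..1, deriv (fun u => f u (x (η t))) (s * x t)) ∧
    Continuous (fun t => ∫ s in (0:ℝ)..1, deriv (fun v => f 0 v) (s * x (η t))) ∧
    (∀ t, f (x t) (x (η t)) =
      (∫ s in (0:ℝ)..1, deriv (fun u => f u (x (η t))) (s * x t)) * x t +
      (∫ s in (0:ℝ)..1, deriv (fun v => f 0 v) (s * x (η t))) * x (η t)) ∧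
    (∃ a₀ b₀ b₁ : ℝ, 0 < a₀ ∧ 0 < b₀ ∧ b₀ ≤ b₁ ∧
      ∀ z ζ : ℝ → ℝ, (∀ t, z t ∈ Ioo (-M) M) → Continuous ζ →
        (∀ t, HasDerivAt z (f (z t) (z (ζ t))) t) →
        ∀ t, |∫ s in (0:ℝ)..1, deriv (fun u => f u (z (ζ t))) (s * z t)| ≤ a₀ ∧
          -b₁ ≤ (∫ s in (0:ℝ)..1, deriv (fun v => f 0 v) (s * z (ζ t))) ∧
          (∫ s in (0:ℝ)..1, deriv (fun v => f 0 v) (s * z (ζ t))) ≤ -b₀) := by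
  have hx : Continuous x := continuous_iff_continuousAt.2 fun t => (hx_ode t).continuousAt
  have hf₀ := contDiff_partial_snd hf 0
  have hd₁ := continuous_deriv_partial_fst hf
  have hd₂ : Continuous (deriv fun v => f 0 v) := hf₀.continuous_deriv le_rfl
  have hb : Continuous fun v => ∫ s in (0:ℝ)..1, deriv (fun v => f 0 v) (s * v) :=
    intervalIntegral.continuous_parametric_intervalIntegral_of_continuous' (by fun_prop) 0 1
  obtain ⟨a₀, ha₀, ha⟩ := exists_abs_integral_deriv_partial_fst_le hf M
  obtain ⟨b₀, b₁, hb₀, hb₀₁, hb₁⟩ :=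
    isCompact_Icc.exists_neg_bounds (hb.continuousOn (s := Icc (-M) M))
      fun v _ => integral_deriv_mul_neg hf₀ hf_neg hf_d2 v
  refine ⟨intervalIntegral.continuous_parametric_intervalIntegral_of_continuous'
      (hd₁.comp₂ (by fun_prop) (by fun_prop)) 0 1, hb.comp (hx.comp hη_cont), fun t => ?_,
    a₀, b₀, b₁, ha₀, hb₀, hb₀₁, fun z ζ hz _ _ t => ?_⟩
  · have hfst := sub_eq_integral_deriv_mul (contDiff_partial_fst hf (x (η t))) (x t)
    have hsnd := sub_eq_integral_deriv_mul hf₀ (x (η t))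
    rw [eq_zero_of_forall_mul_neg hf₀.continuous.continuousAt hf_neg] at hsnd
    linarith
  · have hzM : ∀ t, z t ∈ Icc (-M) M := fun t => Ioo_subset_Icc_self (hz t)
    exact ⟨ha _ (hzM t) _ (hzM (ζ t)), hb₁ _ (hzM (ζ t))⟩

/-- Decomposition of the nonlinearity along a solution: with
`a(t) = ∫₀¹ ∂₁f(s·x(t), x(η(t))) ds` and `b(t) = ∫₀¹ ∂₂f(0, s·x(η(t))) ds`,
the functions `a`, `b` are continuous, `x′(t) = a(t)·x(t) + b(t)·x(η(t))`, and
there are constants `a₀ > 0` and `0 < b₀ ≤ b₁`, depending only on `f` and `M`,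
such that `|a(t)| ≤ a₀` and `-b₁ ≤ b(t) ≤ -b₀ < 0` for all `t`. -/
theorem linear_decomposition_along_solution
    (M : ℝ) (hM : 0 < M)
    (f : ℝ → ℝ → ℝ) (hf : ContDiff ℝ 1 (Function.uncurry f))
    (hf_neg : ∀ y : ℝ, y ≠ 0 → y * f 0 y < 0)
    (hf_d2 : deriv (fun y => f 0 y) 0 < 0)
    (x η : ℝ → ℝ)
    (hx_range : ∀ t, x t ∈ Ioo (-M) M)
    (hη_cont : Continuous η)
    (hx_ode : ∀ t, HasDerivAt x (f (x t) (x (η t))) t) :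
    Continuous (fun t => ∫ s in (0:ℝ)..1, deriv (fun u => f u (x (η t))) (s * x t)) ∧
    Continuous (fun t => ∫ s in (0:ℝ)..1, deriv (fun v => f 0 v) (s * x (η t))) ∧
    (∀ t, f (x t) (x (η t)) =
      (∫ s in (0:ℝ)..1, deriv (fun u => f u (x (η t))) (s * x t)) * x t +
      (∫ s in (0:ℝ)..1, deriv (fun v => f 0 v) (s * x (η t))) * x (η t)) ∧
    (∃ a₀ b₀ b₁ : ℝ, 0 < a₀ ∧ 0 < b₀ ∧ b₀ ≤ b₁ ∧
      ∀ z ζ : ℝ → ℝ, (∀ t, z t ∈ Ioo (-M) M) → Continuous ζ →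
        (∀ t, HasDerivAt z (f (z t) (z (ζ t))) t) →
        ∀ t, |∫ s in (0:ℝ)..1, deriv (fun u => f u (z (ζ t))) (s * z t)| ≤ a₀ ∧
          -b₁ ≤ (∫ s in (0:ℝ)..1, deriv (fun v => f 0 v) (s * z (ζ t))) ∧
          (∫ s in (0:ℝ)..1, deriv (fun v => f 0 v) (s * z (ζ t))) ≤ -b₀) :=
  linear_decomposition_along_solution_general M f hf hf_neg hf_d2 x η hη_cont hx_ode
end

section
/- Let φ : [a,b] → ℝ be continuous and not identically zero, and for each n ∈ ℕ let φⁿ : [aⁿ,bⁿ] → ℝ be continuous and not identically zero, with aⁿ < bⁿ. If max_{s ∈ [a,b] ∩ [aⁿ,bⁿ]} |φ(s) − φⁿ(s)| → 0, aⁿ → a, and bⁿ → b as n → ∞, then V(φ,[a,b]) ≤ liminf_{n → ∞} V(φⁿ,[aⁿ,bⁿ]). -/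
/-!
Every sign-change chain `s⁰ < ⋯ < sᵏ` of `φ` in `[a,b]` can be pushed into the open interval
`(a,b)`: contract `[a,b]` slightly towards its midpoint and use continuity of `φ`. The pushed
chain lies in `[aⁿ,bⁿ]` for large `n`, and `φⁿ → φ` at each of its finitely many points, so it is
a sign-change chain of `φⁿ` as well. Hence every `k ≤ sc(φ,[a,b])` is eventually
`≤ sc(φⁿ,[aⁿ,bⁿ])`; since a finite `sc` is attained by a chain and `V` rounds `sc` up to an odd
value, the inequality passes to `V`.
-/

open Set

/-- The set of integers `k ≥ 1` such that `φ` has `k` sign changes witnessed by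
points `s⁰ < s¹ < ⋯ < sᵏ` in `[a,b]` with `φ(sⁱ⁻¹)·φ(sⁱ) < 0`. -/
def scSet (φ : ℝ → ℝ) (a b : ℝ) : Set ℕ :=
  {k | 1 ≤ k ∧ ∃ s : ℕ → ℝ, (∀ i, i ≤ k → s i ∈ Set.Icc a b) ∧
    (∀ i, i < k → s i < s (i + 1)) ∧
    (∀ i, 1 ≤ i → i ≤ k → φ (s (i - 1)) * φ (s i) < 0)}

open Classical in
/-- The sign-change counting function `sc(φ,[a,b])` with values in `ℕ∞`. -/
noncomputable def sc (φ : ℝ → ℝ) (a b : ℝ) : ℕ∞ :=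
  if (∀ s ∈ Set.Icc a b, 0 ≤ φ s) ∨ (∀ s ∈ Set.Icc a b, φ s ≤ 0) then 0
  else sSup ((fun n : ℕ => (n : ℕ∞)) '' scSet φ a b)

open Classical in
/-- The discrete Lyapunov function `V(φ,[a,b])`: equals `sc(φ,[a,b])` if the latter
is odd or infinite, and `sc(φ,[a,b]) + 1` otherwise. -/
noncomputable def V (φ : ℝ → ℝ) (a b : ℝ) : ℕ∞ :=
  if ∃ n : ℕ, sc φ a b = (n : ℕ∞) ∧ Even n then sc φ a b + 1 else sc φ a b

/-- Membership in the regularity class `H_{[a,b]}` for a `C¹` function `φ` with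
derivative `φ'`: boundary nondegeneracy and all zeros simple. -/
def Hmem (φ φ' : ℝ → ℝ) (a b : ℝ) : Prop :=
  (φ b ≠ 0 ∨ φ a * φ' b < 0) ∧ (φ a ≠ 0 ∨ φ' a * φ b > 0) ∧
  ∀ s ∈ Set.Icc a b, φ s = 0 → φ' s ≠ 0

open Filter Topology

section SignChanges

variable {φ : ℝ → ℝ} {a b : ℝ} {k : ℕ}

lemma mul_neg_of_mul_pos_of_mul_pos {x y x' y' : ℝ} (h : x * y < 0) (hx : 0 < x * x')
    (hy : 0 < y * y') : x' * y' < 0 :=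
  neg_of_mul_pos_right (by rw [mul_mul_mul_comm]; exact mul_pos hx hy) h.le

lemma scSet_mono {c d : ℝ} (h : Icc a b ⊆ Icc c d) : scSet φ a b ⊆ scSet φ c d := by
  rintro k ⟨hk, s, hs, hlt, hsign⟩
  exact ⟨hk, s, fun i hi => h (hs i hi), hlt, hsign⟩

lemma mem_scSet_of_mem_scSet_comp {h : ℝ → ℝ} (hh : StrictMono h)
    (hk : k ∈ scSet (φ ∘ h) a b) : k ∈ scSet φ (h a) (h b) := by
  obtain ⟨hk, s, hs, hlt, hsign⟩ := hk
  exact ⟨hk, h ∘ s, fun i hi => ⟨hh.monotone (hs i hi).1, hh.monotone (hs i hi).2⟩,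
    fun i hi => hh (hlt i hi), hsign⟩

theorem eventually_mem_scSet_of_tendsto {ι : Type*} {l : Filter ι} {ψ : ι → ℝ → ℝ}
    (hk : k ∈ scSet φ a b) (hψ : ∀ x ∈ Icc a b, Tendsto (fun i => ψ i x) l (𝓝 (φ x))) :
    ∀ᶠ i in l, k ∈ scSet (ψ i) a b := by
  obtain ⟨hk1, s, hs, hlt, hsign⟩ := hk
  have hne : ∀ j ≤ k, φ (s j) ≠ 0 := by
    rintro (_ | j) hj
    · exact left_ne_zero_of_mul (hsign 1 le_rfl hk1).ne
    · exact right_ne_zero_of_mul (hsign (j + 1) (by omega) hj).ne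
  have hagree : ∀ᶠ i in l, ∀ j ∈ Iic k, 0 < φ (s j) * ψ i (s j) :=
    (eventually_all_finite (finite_Iic k)).2 fun j hj =>
      ((hψ _ (hs j hj)).const_mul (φ (s j))).eventually_const_lt (mul_self_pos.2 (hne j hj))
  filter_upwards [hagree] with i hi
  exact ⟨hk1, s, hs, hlt, fun j hj1 hjk =>
    mul_neg_of_mul_pos_of_mul_pos (hsign j hj1 hjk) (hi _ (mem_Iic.2 (by omega))) (hi j hjk)⟩

theorem exists_lt_lt_mem_scSet (hφ : ContinuousOn φ (Icc a b))
    (hk : k ∈ scSet φ a b) : ∃ a' b', a < a' ∧ b' < b ∧ k ∈ scSet φ a' b' := by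
  have hab : a < b := by
    obtain ⟨hk1, s, hs, hlt, -⟩ := hk
    exact (hs 0 (by omega)).1.trans_lt ((hlt 0 hk1).trans_le (hs 1 hk1).2)
  let h : ℝ → ℝ → ℝ := fun t x => x + t * ((a + b) / 2 - x)
  have hmem : ∀ᶠ t in 𝓝[>] (0 : ℝ), t ∈ Ioo 0 1 := Ioo_mem_nhdsGT one_pos
  have hconv : ∀ x ∈ Icc a b, Tendsto (fun t => (φ ∘ h t) x) (𝓝[>] 0) (𝓝 (φ x)) := by
    intro x hx
    refine (hφ x hx).tendsto.comp (tendsto_nhdsWithin_iff.2 ⟨?_, ?_⟩)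
    · exact ((continuous_const.add (continuous_id.mul continuous_const)).tendsto' 0 x
        (by simp)).mono_left nhdsWithin_le_nhds
    · filter_upwards [hmem] with t ht
      constructor <;> dsimp only [h] <;> nlinarith [hx.1, hx.2, ht.1, ht.2]
  obtain ⟨t, ht, hkt⟩ := (hmem.and (eventually_mem_scSet_of_tendsto hk hconv)).exists
  have hmono : StrictMono (h t) := fun x y hxy => by nlinarith [ht.2]
  refine ⟨h t a, h t b, ?_, ?_, mem_scSet_of_mem_scSet_comp hmono hkt⟩
  all_goals dsimp only [h]; nlinarith [ht.1]

end SignChanges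

lemma IsCompact.bddAbove_range_abs_sub {α : Type*} [TopologicalSpace α] {K : Set α}
    (hK : IsCompact K) {f g : α → ℝ} (hf : ContinuousOn f K) (hg : ContinuousOn g K) :
    BddAbove (range fun x : K => |f x - g x|) := by
  simpa only [image_eq_range, Pi.sub_apply] using hK.bddAbove_image (hf.sub hg).abs

section UniformConvergence

variable {ι : Type*} {l : Filter ι} {a b : ℝ} {φ : ℝ → ℝ} {an bn : ι → ℝ} {φn : ι → ℝ → ℝ}

theorem tendsto_apply_of_tendsto_iSup_abs_sub (hφ : ContinuousOn φ (Icc a b))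
    (hφn : ∀ i, ContinuousOn (φn i) (Icc (an i) (bn i)))
    (hconv : Tendsto (fun i => ⨆ s : ↥(Icc a b ∩ Icc (an i) (bn i)), |φ s - φn i s|) l (𝓝 0))
    (ha : Tendsto an l (𝓝 a)) (hb : Tendsto bn l (𝓝 b)) {x : ℝ} (hx : x ∈ Ioo a b) :
    Tendsto (fun i => φn i x) l (𝓝 (φ x)) := by
  have hle : ∀ᶠ i in l,
      |φn i x - φ x| ≤ ⨆ s : ↥(Icc a b ∩ Icc (an i) (bn i)), |φ s - φn i s| := by
    filter_upwards [ha.eventually_lt_const hx.1, hb.eventually_const_lt hx.2] with i hai hbi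
    have hbdd := (isCompact_Icc.inter_right isClosed_Icc).bddAbove_range_abs_sub
      (hφ.mono inter_subset_left) ((hφn i).mono inter_subset_right)
    rw [abs_sub_comm]
    exact le_ciSup hbdd ⟨x, Ioo_subset_Icc_self hx, hai.le, hbi.le⟩
  exact tendsto_iff_norm_sub_tendsto_zero.2 <|
    squeeze_zero' (.of_forall fun _ => abs_nonneg _) hle hconv

theorem eventually_mem_scSet_of_tendsto_iSup_abs_sub (hφ : ContinuousOn φ (Icc a b))
    (hφn : ∀ i, ContinuousOn (φn i) (Icc (an i) (bn i)))
    (hconv : Tendsto (fun i => ⨆ s : ↥(Icc a b ∩ Icc (an i) (bn i)), |φ s - φn i s|) l (𝓝 0))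
    (ha : Tendsto an l (𝓝 a)) (hb : Tendsto bn l (𝓝 b)) {k : ℕ} (hk : k ∈ scSet φ a b) :
    ∀ᶠ i in l, k ∈ scSet (φn i) (an i) (bn i) := by
  obtain ⟨a', b', ha', hb', hk'⟩ := exists_lt_lt_mem_scSet hφ hk
  have hk'n : ∀ᶠ i in l, k ∈ scSet (φn i) a' b' :=
    eventually_mem_scSet_of_tendsto hk' fun x hx =>
      tendsto_apply_of_tendsto_iSup_abs_sub hφ hφn hconv ha hb (Icc_subset_Ioo ha' hb' hx)
  filter_upwards [hk'n, ha.eventually_le_const ha', hb.eventually_const_le hb'] with i hi hai hbi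
  exact scSet_mono (Icc_subset_Icc hai hbi) hi

end UniformConvergence

section Lyapunov

variable {φ ψ : ℝ → ℝ} {a b c d : ℝ}

lemma sc_eq_sSup : sc φ a b = sSup ((↑) '' scSet φ a b) := by
  unfold sc
  split_ifs with h
  · suffices scSet φ a b = ∅ by simp [this]
    refine eq_empty_of_forall_notMem ?_
    rintro k ⟨hk, s, hs, -, hsign⟩
    have h01 : φ (s 0) * φ (s 1) < 0 := hsign 1 le_rfl hk
    rcases h with h | h
    · exact h01.not_ge (mul_nonneg (h _ (hs 0 (by omega))) (h _ (hs 1 hk)))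
    · exact h01.not_ge (mul_nonneg_of_nonpos_of_nonpos (h _ (hs 0 (by omega))) (h _ (hs 1 hk)))
  · rfl

lemma natCast_le_sc {k : ℕ} (hk : k ∈ scSet φ a b) : (k : ℕ∞) ≤ sc φ a b :=
  sc_eq_sSup ▸ le_sSup (mem_image_of_mem _ hk)

lemma mem_scSet_of_sc_eq {m : ℕ} (h : sc φ a b = m) (hm : m ≠ 0) : m ∈ scSet φ a b := by
  rw [sc_eq_sSup] at h
  have hS : (scSet φ a b).Nonempty := by
    rw [nonempty_iff_ne_empty]
    rintro hS
    rw [hS, image_empty, sSup_empty, bot_eq_zero] at h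
    exact hm (by exact_mod_cast h.symm)
  have : Nonempty ((↑) '' scSet φ a b : Set ℕ∞) := (hS.image _).to_subtype
  obtain ⟨k, hk, hkm⟩ := h ▸ ENat.sSup_mem_of_nonempty_of_lt_top (h ▸ ENat.natCast_lt_top m)
  exact Nat.cast_injective hkm ▸ hk

lemma sc_le_V : sc φ a b ≤ V φ a b := by
  unfold V
  split_ifs
  · exact le_self_add
  · exact le_rfl

lemma V_ne_natCast_of_even {n : ℕ} (hn : Even n) : V φ a b ≠ n := by
  unfold V
  split_ifs with h
  · obtain ⟨m, hm, hme⟩ := h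
    rw [hm, ← Nat.cast_add_one, ne_eq, Nat.cast_inj]
    rintro rfl
    exact Nat.not_even_iff_odd.2 hme.add_one hn
  · exact fun hV => h ⟨n, hV, hn⟩

-- Every value of `V` is odd or infinite.
lemma V_le_V_of_sc_le (h : sc φ a b ≤ V ψ c d) : V φ a b ≤ V ψ c d := by
  conv_lhs => unfold V
  split_ifs with hev
  · obtain ⟨m, hm, hme⟩ := hev
    rw [hm] at h ⊢
    exact Order.add_one_le_of_lt (h.lt_of_ne (V_ne_natCast_of_even hme).symm)
  · exact h

theorem V_le_liminf_of_eventually_mem_scSet {ι : Type*} {l : Filter ι} {ψ : ι → ℝ → ℝ}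
    {c d : ι → ℝ} (h : ∀ k ∈ scSet φ a b, ∀ᶠ i in l, k ∈ scSet (ψ i) (c i) (d i)) :
    V φ a b ≤ liminf (fun i => V (ψ i) (c i) (d i)) l := by
  have hle : ∀ k ∈ scSet φ a b, ∀ᶠ i in l, (k : ℕ∞) ≤ V (ψ i) (c i) (d i) := fun k hk =>
    (h k hk).mono fun i hi => (natCast_le_sc hi).trans sc_le_V
  cases hsc : sc φ a b using ENat.recTopCoe with
  | top =>
    have hV : V φ a b = sc φ a b := by simp [V, hsc]
    rw [hV, sc_eq_sSup]
    exact sSup_le <| forall_mem_image.2 fun k hk => le_liminf_of_le (h := hle k hk)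
  | coe m =>
    refine le_liminf_of_le (h := ?_)
    have hsc_le : ∀ᶠ i in l, sc φ a b ≤ V (ψ i) (c i) (d i) := by
      rcases eq_or_ne m 0 with rfl | hm
      · exact .of_forall fun i => hsc ▸ zero_le
      · exact hsc ▸ hle m (mem_scSet_of_sc_eq hsc hm)
    exact hsc_le.mono fun i hi => V_le_V_of_sc_le hi

end Lyapunov

theorem V_lower_semicontinuous_general
    (a b : ℝ) (φ : ℝ → ℝ)
    (hφ_cont : ContinuousOn φ (Set.Icc a b))
    (an bn : ℕ → ℝ) (φn : ℕ → ℝ → ℝ)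
    (hφn_cont : ∀ n, ContinuousOn (φn n) (Set.Icc (an n) (bn n)))
    (hconv : Filter.Tendsto
      (fun n => ⨆ s : ↥(Set.Icc a b ∩ Set.Icc (an n) (bn n)), |φ (s : ℝ) - φn n (s : ℝ)|)
      Filter.atTop (nhds 0))
    (ha : Filter.Tendsto an Filter.atTop (nhds a))
    (hb : Filter.Tendsto bn Filter.atTop (nhds b)) :
    V φ a b ≤ Filter.liminf (fun n => V (φn n) (an n) (bn n)) Filter.atTop :=
  V_le_liminf_of_eventually_mem_scSet fun _ hk =>
    eventually_mem_scSet_of_tendsto_iSup_abs_sub hφ_cont hφn_cont hconv ha hb hk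

/-- Lower semicontinuity of the discrete Lyapunov function `V`: if `φⁿ → φ` uniformly
on the intersections of the domains and `aⁿ → a`, `bⁿ → b`, then
`V(φ,[a,b]) ≤ liminf V(φⁿ,[aⁿ,bⁿ])`. -/
theorem V_lower_semicontinuous
    (a b : ℝ) (φ : ℝ → ℝ)
    (hφ_cont : ContinuousOn φ (Set.Icc a b))
    (hφ_ne : ∃ s ∈ Set.Icc a b, φ s ≠ 0)
    (an bn : ℕ → ℝ) (φn : ℕ → ℝ → ℝ)
    (hab_n : ∀ n, an n < bn n)
    (hφn_cont : ∀ n, ContinuousOn (φn n) (Set.Icc (an n) (bn n)))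
    (hφn_ne : ∀ n, ∃ s ∈ Set.Icc (an n) (bn n), φn n s ≠ 0)
    (hconv : Filter.Tendsto
      (fun n => ⨆ s : ↥(Set.Icc a b ∩ Set.Icc (an n) (bn n)), |φ (s : ℝ) - φn n (s : ℝ)|)
      Filter.atTop (nhds 0))
    (ha : Filter.Tendsto an Filter.atTop (nhds a))
    (hb : Filter.Tendsto bn Filter.atTop (nhds b)) :
    V φ a b ≤ Filter.liminf (fun n => V (φn n) (an n) (bn n)) Filter.atTop :=
  V_lower_semicontinuous_general a b φ hφ_cont an bn φn hφn_cont hconv ha hb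
end

section
/- Let I = [a,b] and let c, τ : I → ℝ be continuous with c(t) < 0 and τ(t) > 0 for all t ∈ I, such that η : I → ℝ, η(t) = t − τ(t), is strictly increasing on I. Let J = η(I) ∪ I and let y : J → ℝ be continuous, continuously differentiable on I, satisfy y′(t) = c(t)·y(η(t)) for all t ∈ I, and suppose that for every t ∈ I the restriction of y to [η(t), t] is not identically zero. Then for all t¹, t² ∈ I with t¹ < t², one has V(y,[η(t²), t²]) ≤ V(y,[η(t¹), t¹]). -/
/-
Sign changes are pulled back by the equation: for `u < v` in `I` with `y u * y v ≤ 0` and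
`y v ≠ 0`, the mean value theorem gives `ξ ∈ (u, v)` where `y' ξ` has the sign of `y v`, so, as
`c < 0`, the point `η ξ ∈ (η u, η v)` carries the opposite sign.

Let `s₀ < ⋯ < sₖ` be an even number of sign changes in `[η v, v]`, and `η v ≤ u ≤ v`. As `k` is
even, `s₀` and `sₖ` have the same sign. While `sₖ > u`, pulling back the pair `(max sₖ₋₁ u, sₖ)`
yields a point left of `s₀` with the sign opposite to `s₀`; putting it in front and dropping `sₖ`
again gives `k` sign changes with equal end signs (if `sₖ₋₁ < u` and `y u` has the sign of `sₖ`,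
replace `sₖ` by `u` instead). Eventually all points lie in `[η u, u]`. So the even sign-change
counts, which determine `V`, do not increase along steps with `η v ≤ u`, and as `τ` is bounded
below by a positive constant on `I`, any `t¹ < t²` are joined by such steps.
-/

open Set

open Function

def IsSignChangeSeq (φ : ℝ → ℝ) (s : ℕ → ℝ) (k : ℕ) : Prop :=
  ∀ i < k, s i < s (i + 1) ∧ φ (s i) * φ (s (i + 1)) < 0

def consSeq (q : ℝ) (s : ℕ → ℝ) : ℕ → ℝ
  | 0 => q
  | i + 1 => s i

namespace IsSignChangeSeq

variable {φ : ℝ → ℝ} {s : ℕ → ℝ} {k : ℕ}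

theorem mono (hs : IsSignChangeSeq φ s k) {j : ℕ} (hjk : j ≤ k) : IsSignChangeSeq φ s j :=
  fun i hi => hs i (hi.trans_le hjk)

theorem apply_le_apply (hs : IsSignChangeSeq φ s k) {i j : ℕ} (hij : i ≤ j) (hj : j ≤ k) :
    s i ≤ s j :=
  (strictMonoOn_Iic_of_lt_succ fun i hi => by simpa using (hs i hi).1).monotoneOn
    (mem_Iic.2 (hij.trans hj)) (mem_Iic.2 hj) hij

theorem mul_pos_of_even (hs : IsSignChangeSeq φ s k) (hk : 1 ≤ k) (he : Even k) :
    0 < φ (s 0) * φ (s k) := by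
  have key : ∀ n, 2 * n ≤ k → 0 < φ (s 0) * φ (s (2 * n)) := by
    intro n
    induction n with
    | zero => exact fun _ => mul_self_pos.2 (left_ne_zero_of_mul (hs 0 hk).2.ne)
    | succ n ih =>
      intro hn
      have h₁ := (hs (2 * n) (by omega)).2
      have h₂ := (hs (2 * n + 1) (by omega)).2
      rw [show 2 * (n + 1) = 2 * n + 1 + 1 by ring]
      nlinarith [ih (by omega), sq_nonneg (φ (s (2 * n))), sq_nonneg (φ (s (2 * n + 1)))]
  obtain ⟨n, rfl⟩ := he
  simpa [two_mul] using key n (by omega)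

theorem cons (hs : IsSignChangeSeq φ s k) {q : ℝ} (hq : q < s 0)
    (hsign : φ q * φ (s 0) < 0) : IsSignChangeSeq φ (consSeq q s) (k + 1)
  | 0, _ => ⟨hq, hsign⟩
  | i + 1, hi => hs i (by omega)

theorem rotate (hs : IsSignChangeSeq φ s (k + 1)) (hends : 0 < φ (s 0) * φ (s (k + 1)))
    {q : ℝ} (hq : q < s 0) (hsign : φ q * φ (s (k + 1)) < 0) :
    IsSignChangeSeq φ (consSeq q s) (k + 1) ∧ 0 < φ q * φ (s k) := by
  have hlast := (hs k (by omega)).2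
  refine ⟨(hs.mono k.le_succ).cons hq ?_, ?_⟩ <;>
    nlinarith [sq_nonneg (φ (s (k + 1)))]

theorem update_last (hs : IsSignChangeSeq φ s (k + 1)) {u : ℝ} (hlt : s k < u)
    (hsign : 0 < φ u * φ (s (k + 1))) : IsSignChangeSeq φ (update s (k + 1) u) (k + 1) := by
  intro i hi
  rcases (Nat.lt_succ_iff.1 hi).lt_or_eq with hik | rfl
  · rw [update_of_ne (by omega), update_of_ne (by omega)]
    exact hs i (by omega)
  · have hlast := (hs i (by omega)).2
    rw [update_self, update_of_ne (by omega)]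
    exact ⟨hlt, by nlinarith [sq_nonneg (φ (s (i + 1)))]⟩

end IsSignChangeSeq

section SignChanges

variable {φ : ℝ → ℝ} {a b : ℝ} {k m : ℕ}

theorem mem_scSet_iff :
    k ∈ scSet φ a b ↔ 1 ≤ k ∧ ∃ s, (∀ i ≤ k, s i ∈ Icc a b) ∧ IsSignChangeSeq φ s k := by
  constructor
  · rintro ⟨hk, s, hmem, hlt, hsign⟩
    exact ⟨hk, s, hmem, fun i hi => ⟨hlt i hi, by simpa using hsign (i + 1) (by omega) hi⟩⟩
  · rintro ⟨hk, s, hmem, hs⟩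
    refine ⟨hk, s, hmem, fun i hi => (hs i hi).1, fun i h₁ h₂ => ?_⟩
    obtain ⟨j, rfl⟩ : ∃ j, i = j + 1 := ⟨i - 1, by omega⟩
    simpa using (hs j h₂).2

theorem mem_scSet_of_le (h : m ∈ scSet φ a b) (hk : 1 ≤ k) (hkm : k ≤ m) :
    k ∈ scSet φ a b := by
  obtain ⟨-, s, hmem, hs⟩ := mem_scSet_iff.1 h
  exact mem_scSet_iff.2 ⟨hk, s, fun i hi => hmem i (hi.trans hkm), hs.mono hkm⟩

theorem not_nonneg_or_nonpos_of_mem_scSet (h : k ∈ scSet φ a b) :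
    ¬((∀ s ∈ Icc a b, 0 ≤ φ s) ∨ ∀ s ∈ Icc a b, φ s ≤ 0) := by
  obtain ⟨hk, s, hmem, hs⟩ := mem_scSet_iff.1 h
  have hsign := (hs 0 hk).2
  rintro (hpos | hneg)
  · nlinarith [hpos _ (hmem 0 (by omega)), hpos _ (hmem 1 hk)]
  · nlinarith [hneg _ (hmem 0 (by omega)), hneg _ (hmem 1 hk)]

theorem coe_le_sc_iff (hm : 1 ≤ m) : (m : ℕ∞) ≤ sc φ a b ↔ m ∈ scSet φ a b := by
  constructor
  · intro h
    unfold sc at h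
    split_ifs at h
    · exact absurd (show m ≤ 0 by exact_mod_cast h) (by omega)
    · have hlt : ((m - 1 : ℕ) : ℕ∞) < m := by exact_mod_cast Nat.sub_one_lt (by omega)
      obtain ⟨-, ⟨k, hk, rfl⟩, hk'⟩ := lt_sSup_iff.1 (hlt.trans_le h)
      have : m - 1 < k := Nat.cast_lt.1 hk'
      exact mem_scSet_of_le hk hm (by omega)
  · intro h
    rw [sc, if_neg (not_nonneg_or_nonpos_of_mem_scSet h)]
    exact le_sSup ⟨m, h, rfl⟩

theorem V_eq_of_sc_eq_coe {n : ℕ} (h : sc φ a b = n) : V φ a b = (2 * (n / 2) + 1 : ℕ) := by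
  unfold V
  rw [h]
  split_ifs with he
  · obtain ⟨k, hk, hke⟩ := he
    obtain rfl : n = k := by exact_mod_cast hk
    rw [Nat.two_mul_div_two_of_even hke]
    rfl
  · have hodd : Odd n := Nat.not_even_iff_odd.1 fun hn => he ⟨n, rfl, hn⟩
    rw [Nat.two_mul_div_two_add_one_of_odd hodd]

theorem V_eq_top_of_sc_eq_top (h : sc φ a b = ⊤) : V φ a b = ⊤ := by
  simp [V, h]

theorem V_le_V_of_forall_even {ψ : ℝ → ℝ} {c d : ℝ}
    (h : ∀ m, Even m → m ∈ scSet φ a b → m ∈ scSet ψ c d) : V φ a b ≤ V ψ c d := by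
  have hsc : ∀ m : ℕ, 2 ≤ m → Even m → (m : ℕ∞) ≤ sc φ a b → (m : ℕ∞) ≤ sc ψ c d :=
    fun m hm he hle => (coe_le_sc_iff (by omega)).2 (h m he ((coe_le_sc_iff (by omega)).1 hle))
  cases hψ : sc ψ c d using ENat.recTopCoe with
  | top => rw [V_eq_top_of_sc_eq_top hψ]; exact le_top
  | coe n =>
    cases hφ : sc φ a b using ENat.recTopCoe with
    | top =>
      have := hsc (2 * n + 2) (by omega) ⟨n + 1, by ring⟩ (hφ ▸ le_top)
      rw [hψ, Nat.cast_le] at this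
      omega
    | coe k =>
      rw [V_eq_of_sc_eq_coe hφ, V_eq_of_sc_eq_coe hψ, Nat.cast_le]
      rcases Nat.lt_or_ge k 2 with hk | hk
      · omega
      have := hsc (2 * (k / 2)) (by omega) (even_two_mul _)
        (by rw [hφ, Nat.cast_le]; omega)
      rw [hψ, Nat.cast_le] at this
      omega

end SignChanges

/-- `y u = 0` is allowed: `u` may be the right end of the target window. -/
def PullsBackSignChanges (y η : ℝ → ℝ) (S : Set ℝ) : Prop :=
  ∀ u ∈ S, ∀ v ∈ S, u < v → y u * y v ≤ 0 → y v ≠ 0 → ∃ q ∈ Ioo (η u) (η v), y q * y v < 0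

section Windows

variable {y η : ℝ → ℝ} {a b u v : ℝ} {k : ℕ} {s : ℕ → ℝ}

theorem exists_rotate_window (hη : MonotoneOn η (Icc a b))
    (hpb : PullsBackSignChanges y η (Icc a b)) (hu : u ∈ Icc a b) (hv : v ∈ Icc a b)
    (huv : u ≤ v) (hηv : η v ≤ u) (hs : IsSignChangeSeq y s (k + 1))
    (hmem : ∀ i ≤ k + 1, s i ∈ Icc (η v) v) (hends : 0 < y (s 0) * y (s (k + 1)))
    (hlast : u < s (k + 1)) (hkeep : s k < u → y u * y (s (k + 1)) ≤ 0) :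
    ∃ w ∈ Icc a b, ∃ q < u, u ≤ w ∧ η w ≤ u ∧ IsSignChangeSeq y (consSeq q s) (k + 1) ∧
      (∀ i ≤ k + 1, consSeq q s i ∈ Icc (η w) w) ∧ 0 < y q * y (s k) := by
  have hℓ : s (k + 1) ∈ Icc a b := ⟨hu.1.trans hlast.le, (hmem _ le_rfl).2.trans hv.2⟩
  have hηℓ : η (s (k + 1)) ≤ η v := hη hℓ hv (hmem _ le_rfl).2
  have hprev : s k ≤ v := (hmem k (by omega)).2
  have hchange := hs k (by omega)
  set w := max (s k) u with hw_def
  have hw : w ∈ Icc a b := ⟨hu.1.trans (le_max_right _ _), max_le (hprev.trans hv.2) hu.2⟩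
  have hηw : η w ≤ η v := hη hw hv (max_le hprev huv)
  have hsign : y w * y (s (k + 1)) ≤ 0 := by
    rcases lt_or_ge (s k) u with h | h
    · rw [hw_def, max_eq_right h.le]
      exact hkeep h
    · rw [hw_def, max_eq_left h]
      exact hchange.2.le
  obtain ⟨q, hq, hqℓ⟩ := hpb w hw _ hℓ (max_lt hchange.1 hlast) hsign
    (right_ne_zero_of_mul hchange.2.ne)
  have hqu : q < u := hq.2.trans_le (hηℓ.trans hηv)
  obtain ⟨hs', hends'⟩ := hs.rotate hends (hq.2.trans_le (hηℓ.trans (hmem 0 (by omega)).1)) hqℓ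
  refine ⟨w, hw, q, hqu, le_max_right _ _, hηw.trans hηv, hs', ?_, hends'⟩
  rintro (_ | i) hi
  · exact ⟨hq.1.le, hqu.le.trans (le_max_right _ _)⟩
  · exact ⟨hηw.trans (hmem i (by omega)).1,
      (hs.apply_le_apply (by omega) (by omega)).trans (le_max_left _ _)⟩

theorem exists_signChangeSeq_window (hη : MonotoneOn η (Icc a b))
    (hpb : PullsBackSignChanges y η (Icc a b)) (hu : u ∈ Icc a b) (n : ℕ) :
    ∀ v ∈ Icc a b, ∀ s : ℕ → ℝ, u ≤ v → η v ≤ u → IsSignChangeSeq y s (k + 1) →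
      (∀ i ≤ k + 1, s i ∈ Icc (η v) v) → 0 < y (s 0) * y (s (k + 1)) →
      (∀ i, i + n ≤ k + 1 → s i ≤ u) →
      ∃ s', IsSignChangeSeq y s' (k + 1) ∧ ∀ i ≤ k + 1, s' i ∈ Icc (η u) u := by
  induction n with
  | zero =>
    intro v hv s huv _ hs hmem _ hle
    exact ⟨s, hs, fun i hi => ⟨(hη hu hv huv).trans (hmem i hi).1, hle i (by omega)⟩⟩
  | succ n ih =>
    intro v hv s huv hηv hs hmem hends hle
    have hηuv := hη hu hv huv
    by_cases hlast : s (k + 1) ≤ u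
    · exact ⟨s, hs, fun i hi =>
        ⟨hηuv.trans (hmem i hi).1, (hs.apply_le_apply hi le_rfl).trans hlast⟩⟩
    by_cases hreplace : s k < u ∧ 0 < y u * y (s (k + 1))
    · refine ⟨update s (k + 1) u, hs.update_last hreplace.1 hreplace.2, fun i hi => ?_⟩
      rcases hi.lt_or_eq with hik | rfl
      · rw [update_of_ne hik.ne]
        exact ⟨hηuv.trans (hmem i hi).1,
          (hs.apply_le_apply (by omega) (by omega)).trans hreplace.1.le⟩
      · rw [update_self]
        exact ⟨hηuv.trans hηv, le_rfl⟩
    obtain ⟨w, hw, q, hqu, huw, hηw, hs', hmem', hends'⟩ := exists_rotate_window hη hpb hu hv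
      huv hηv hs hmem hends (not_le.1 hlast) fun h => not_lt.1 fun hpos => hreplace ⟨h, hpos⟩
    refine ih w hw _ huw hηw hs' hmem' hends' ?_
    rintro (_ | i) hi
    · exact hqu.le
    · exact hle i (by omega)

end Windows

theorem mem_scSet_window_of_even {y η : ℝ → ℝ} {a b u v : ℝ} (hη : MonotoneOn η (Icc a b))
    (hpb : PullsBackSignChanges y η (Icc a b)) (hu : u ∈ Icc a b) (hv : v ∈ Icc a b)
    (huv : u ≤ v) (hηv : η v ≤ u) {m : ℕ} (hm : Even m) (h : m ∈ scSet y (η v) v) :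
    m ∈ scSet y (η u) u := by
  obtain ⟨hm1, s, hmem, hs⟩ := mem_scSet_iff.1 h
  obtain ⟨k, rfl⟩ : ∃ k, m = k + 1 := ⟨m - 1, by omega⟩
  obtain ⟨s', hs', hmem'⟩ := exists_signChangeSeq_window hη hpb hu (k + 2) v hv s huv hηv hs
    hmem (hs.mul_pos_of_even hm1 hm) fun i hi => by omega
  exact mem_scSet_iff.2 ⟨hm1, s', hmem', hs'⟩

theorem exists_delayed_mul_neg {y c η : ℝ → ℝ} {u v : ℝ} (huv : u < v)
    (hy : ContinuousOn y (Icc u v)) (hderiv : ∀ t ∈ Ioo u v, HasDerivAt y (c t * y (η t)) t)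
    (hc : ∀ t ∈ Ioo u v, c t < 0) (hsign : y u * y v ≤ 0) (hv : y v ≠ 0) :
    ∃ ξ ∈ Ioo u v, y (η ξ) * y v < 0 := by
  obtain ⟨ξ, hξ, hslope⟩ := exists_hasDerivAt_eq_slope y _ huv hy hderiv
  refine ⟨ξ, hξ, ?_⟩
  have hgrowth : 0 < (y v - y u) * y v := by nlinarith [mul_self_pos.2 hv]
  have hpos : 0 < c ξ * y (η ξ) * y v := by
    rw [hslope, div_mul_eq_mul_div]
    exact div_pos hgrowth (sub_pos.2 huv)
  nlinarith [hc ξ hξ]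

theorem pullsBackSignChanges_of_delay_eq {a b : ℝ} {c η y y' : ℝ → ℝ}
    (hc : ∀ t ∈ Icc a b, c t < 0) (hη : StrictMonoOn η (Icc a b))
    (hy_cont : ContinuousOn y (Icc a b))
    (hy_deriv : ∀ t ∈ Icc a b, HasDerivWithinAt y (y' t) (Icc a b) t)
    (hy_ode : ∀ t ∈ Icc a b, y' t = c t * y (η t)) :
    PullsBackSignChanges y η (Icc a b) := by
  intro u hu v hv huv hsign hv0
  have hsub : Icc u v ⊆ Icc a b := Icc_subset_Icc hu.1 hv.2
  have hderiv : ∀ t ∈ Ioo u v, HasDerivAt y (c t * y (η t)) t := fun t ht => by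
    have ht' : t ∈ Ioo a b := ⟨hu.1.trans_lt ht.1, ht.2.trans_le hv.2⟩
    rw [← hy_ode t (Ioo_subset_Icc_self ht')]
    exact (hy_deriv t (Ioo_subset_Icc_self ht')).hasDerivAt (Icc_mem_nhds ht'.1 ht'.2)
  obtain ⟨ξ, hξ, hneg⟩ := exists_delayed_mul_neg huv (hy_cont.mono hsub) hderiv
    (fun t ht => hc t (hsub (Ioo_subset_Icc_self ht))) hsign hv0
  have hξ' := hsub (Ioo_subset_Icc_self hξ)
  exact ⟨η ξ, ⟨hη hu hξ' hξ.1, hη hξ' hv hξ.2⟩, hneg⟩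

theorem rel_of_le_of_forall_sub_le {R : ℝ → ℝ → Prop} {a b δ : ℝ} (hδ : 0 < δ)
    (htrans : ∀ {x y z}, R x y → R y z → R x z)
    (hstep : ∀ x ∈ Icc a b, ∀ y ∈ Icc a b, x ≤ y → y - x ≤ δ → R x y)
    {x y : ℝ} (hx : x ∈ Icc a b) (hy : y ∈ Icc a b) (hxy : x ≤ y) : R x y := by
  obtain ⟨n, hn⟩ := exists_nat_ge ((y - x) / δ)
  induction n generalizing y with
  | zero =>
    rw [Nat.cast_zero, div_le_iff₀ hδ] at hn
    exact hstep x hx y hy hxy (by linarith)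
  | succ n ih =>
    rw [div_le_iff₀ hδ] at hn
    by_cases hsmall : y - x ≤ δ
    · exact hstep x hx y hy hxy hsmall
    have hz : y - δ ∈ Icc a b := ⟨by linarith [hx.1], by linarith [hy.2]⟩
    refine htrans (ih hz (by linarith) ?_) (hstep _ hz y hy (by linarith) (by linarith))
    rw [div_le_iff₀ hδ]
    push_cast at hn
    linarith

theorem V_monotone_along_solutions_general
    (a b : ℝ)
    (c τ : ℝ → ℝ)
    (hτ_cont : ContinuousOn τ (Set.Icc a b))
    (hc_neg : ∀ t ∈ Set.Icc a b, c t < 0) (hτ_pos : ∀ t ∈ Set.Icc a b, 0 < τ t)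
    (η : ℝ → ℝ) (hη_def : ∀ t, η t = t - τ t)
    (hη_mono : StrictMonoOn η (Set.Icc a b))
    (y y' : ℝ → ℝ)
    (hy_cont : ContinuousOn y (η '' Set.Icc a b ∪ Set.Icc a b))
    (hy_deriv : ∀ t ∈ Set.Icc a b, HasDerivWithinAt y (y' t) (Set.Icc a b) t)
    (hy_ode : ∀ t ∈ Set.Icc a b, y' t = c t * y (η t)) :
    ∀ t1 ∈ Set.Icc a b, ∀ t2 ∈ Set.Icc a b, t1 < t2 →
      V y (η t2) t2 ≤ V y (η t1) t1 := by
  intro t1 ht1 t2 ht2 h12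
  have hpb := pullsBackSignChanges_of_delay_eq hc_neg hη_mono
    (hy_cont.mono subset_union_right) hy_deriv hy_ode
  obtain ⟨t₀, ht₀, hmin⟩ := isCompact_Icc.exists_isMinOn ⟨t1, ht1⟩ hτ_cont
  refine rel_of_le_of_forall_sub_le (R := fun u v => V y (η v) v ≤ V y (η u) u)
    (hτ_pos t₀ ht₀) (fun h₁ h₂ => h₂.trans h₁) (fun u hu v hv huv hvu => ?_) ht1 ht2 h12.le
  have hηv : η v ≤ u := by
    rw [hη_def]
    linarith [show τ t₀ ≤ τ v from hmin hv]
  exact V_le_V_of_forall_even fun m hm =>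
    mem_scSet_window_of_even hη_mono.monotoneOn hpb hu hv huv hηv hm

/-- Monotonicity of the discrete Lyapunov function along solutions of the linear
delay equation `y′(t) = c(t)·y(η(t))` with negative coefficient: for `t¹ < t²` in
`I = [a,b]`, one has `V(y,[η(t²),t²]) ≤ V(y,[η(t¹),t¹])`. -/
theorem V_monotone_along_solutions
    (a b : ℝ) (hab : a ≤ b)
    (c τ : ℝ → ℝ)
    (hc_cont : ContinuousOn c (Set.Icc a b)) (hτ_cont : ContinuousOn τ (Set.Icc a b))
    (hc_neg : ∀ t ∈ Set.Icc a b, c t < 0) (hτ_pos : ∀ t ∈ Set.Icc a b, 0 < τ t)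
    (η : ℝ → ℝ) (hη_def : ∀ t, η t = t - τ t)
    (hη_mono : StrictMonoOn η (Set.Icc a b))
    (y y' : ℝ → ℝ)
    (hy_cont : ContinuousOn y (η '' Set.Icc a b ∪ Set.Icc a b))
    (hy_deriv : ∀ t ∈ Set.Icc a b, HasDerivWithinAt y (y' t) (Set.Icc a b) t)
    (hy'_cont : ContinuousOn y' (Set.Icc a b))
    (hy_ode : ∀ t ∈ Set.Icc a b, y' t = c t * y (η t))
    (hy_ne : ∀ t ∈ Set.Icc a b, ∃ s ∈ Set.Icc (η t) t, y s ≠ 0) :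
    ∀ t1 ∈ Set.Icc a b, ∀ t2 ∈ Set.Icc a b, t1 < t2 →
      V y (η t2) t2 ≤ V y (η t1) t1 :=
  V_monotone_along_solutions_general a b c τ hτ_cont hc_neg hτ_pos η hη_def hη_mono y y' hy_cont
    hy_deriv hy_ode
end
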